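/- arXiv:2502.02155 — 2 statements merged into one kernel-verified Lean document; each statement's English description precedes it below -/
import Mathlib

section
/- For all fixed integers χ ≥ k ≥ 2 there is a constant C > 0 such that every ordered k-uniform hypergraph H on n vertices with interval chromatic number at most χ satisfies R_<(H) ≤ 2^{C·n^{χ-1}}. -/
open Finset
open scoped Classical


lemma pigeonFiber (X : Finset ℕ) (F : Finset (Finset ℕ)) (f : ℕ → Finset (Finset ℕ))
    (hf : ∀ v ∈ X, f v ⊆ F) (q : ℕ) (hq : 2 ^ F.card * q ≤ X.card) :
    ∃ Y, Y ⊆ X ∧ q ≤ Y.card ∧ ∀ v ∈ Y, ∀ w ∈ Y, f v = f w := by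
  rcases Nat.eq_zero_or_pos q with hq0 | hq0
  · exact ⟨∅, by simp [hq0]⟩
  obtain ⟨y, -, hy⟩ := Finset.exists_max_image F.powerset
    (fun y => (X.filter fun v => f v = y).card) ⟨∅, mem_powerset.2 (empty_subset _)⟩
  refine ⟨X.filter fun v => f v = y, filter_subset _ _, ?_, ?_⟩
  · have hsum : X.card = ∑ b ∈ F.powerset, (X.filter fun v => f v = b).card :=
      card_eq_sum_card_fiberwise (fun v hv => mem_powerset.2 (hf v hv))
    have h1 : X.card ≤ F.powerset.card * (X.filter fun v => f v = y).card := by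
      rw [hsum]
      calc ∑ b ∈ F.powerset, (X.filter fun v => f v = b).card
          ≤ F.powerset.card • (X.filter fun v => f v = y).card :=
            Finset.sum_le_card_nsmul _ _ _ (fun b hb => hy b hb)
        _ = _ := by rw [smul_eq_mul]
    rw [card_powerset] at h1
    by_contra hlt
    push_neg at hlt
    have hpos : 0 < 2 ^ F.card := by positivity
    have h2 : 2 ^ F.card * (X.filter fun v => f v = y).card < 2 ^ F.card * q :=
      (Nat.mul_lt_mul_left hpos).2 hlt
    omega
  · intro v hv w hw
    rw [mem_filter] at hv hw
    rw [hv.2, hw.2]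


lemma boolEq {b₁ b₂ : Bool} (h : b₁ = true ↔ b₂ = true) : b₁ = b₂ := by
  cases b₁ <;> cases b₂ <;> simp_all


lemma hyperRamsey (k p : ℕ) :
    ∃ R : ℕ, ∀ (c : Finset ℕ → Bool) (V : Finset ℕ), R ≤ V.card →
      ∃ T, T ⊆ V ∧ T.card = p ∧ ∃ x, ∀ e ⊆ T, e.card = k → c e = x := by
  induction k generalizing p with
  | zero =>
      refine ⟨p, fun c V hV => ?_⟩
      obtain ⟨T, hT, hTcard⟩ := Finset.exists_subset_card_eq hV
      exact ⟨T, hT, hTcard, c ∅, fun e _ hec => by rw [Finset.card_eq_zero.1 hec]⟩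
  | succ k IH =>
      obtain ⟨R, hR⟩ := IH p
      set m := R + 1 with hm
      set K := 2 ^ (2 ^ m) with hK
      have hK2 : 2 ≤ K := by
        have : 1 ≤ 2 ^ m := Nat.one_le_two_pow
        calc 2 = 2 ^ 1 := rfl
          _ ≤ 2 ^ (2 ^ m) := Nat.pow_le_pow_right (by norm_num) this
      refine ⟨K * (2 * K) ^ m, fun c V hV => ?_⟩
      -- the greedy construction
      have greedy : ∀ j : ℕ, ∀ C X : Finset ℕ, C.card + j ≤ m →
          (∀ a ∈ C, ∀ b ∈ X, a < b) →
          (∀ S ⊆ C, S.card = k → ∀ v ∈ X, ∀ w ∈ X,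
            c (insert v S) = c (insert w S)) →
          (∀ S ⊆ C, S.card = k → ∀ v ∈ C, (∀ s ∈ S, s < v) → ∀ w ∈ X,
            c (insert v S) = c (insert w S)) →
          (2 * K) ^ j ≤ X.card →
          ∃ C' X', C ⊆ C' ∧ C' ⊆ C ∪ X ∧ X' ⊆ X ∧ X'.Nonempty ∧
            C'.card = C.card + j ∧
            (∀ a ∈ C', ∀ b ∈ X', a < b) ∧
            (∀ S ⊆ C', S.card = k → ∀ v ∈ X', ∀ w ∈ X',
              c (insert v S) = c (insert w S)) ∧
            (∀ S ⊆ C', S.card = k → ∀ v ∈ C', (∀ s ∈ S, s < v) → ∀ w ∈ X',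
              c (insert v S) = c (insert w S)) := by
        intro j
        induction j with
        | zero =>
            intro C X _ h1 h2 h3 hcard
            exact ⟨C, X, Finset.Subset.refl C, subset_union_left, Finset.Subset.refl X,
              Finset.card_pos.1 (by simpa using hcard), by omega, h1, h2, h3⟩
        | succ j ihj =>
            intro C X hjm h1 h2 h3 hcard
            have hXpos : 0 < X.card := by
              have : 0 < (2 * K) ^ (j + 1) := by positivity
              omega
            have hXne : X.Nonempty := Finset.card_pos.1 hXpos
            set a := X.min' hXne with ha
            have haX : a ∈ X := X.min'_mem hXne
            set C' := insert a C with hC'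
            set X₁ := X.erase a with hX₁
            have haC : a ∉ C := fun haC => lt_irrefl a (h1 a haC a haX)
            have hC'card : C'.card = C.card + 1 := Finset.card_insert_of_notMem haC
            set F := Finset.powersetCard (k) C' with hF
            set f : ℕ → Finset (Finset ℕ) :=
              fun v => F.filter (fun S => c (insert v S) = true) with hfdef
            have hFcard : 2 ^ F.card ≤ K := by
              have h5 : F ⊆ C'.powerset := fun S hS =>
                Finset.mem_powerset.2 (Finset.mem_powersetCard.1 hS).1
              have h6 : F.card ≤ 2 ^ C'.card := by
                calc F.card ≤ C'.powerset.card := Finset.card_le_card h5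
                  _ = 2 ^ C'.card := Finset.card_powerset C'
              have h7 : C'.card ≤ m := by omega
              calc 2 ^ F.card ≤ 2 ^ 2 ^ C'.card := Nat.pow_le_pow_right (by norm_num) h6
                _ ≤ 2 ^ 2 ^ m := Nat.pow_le_pow_right (by norm_num)
                    (Nat.pow_le_pow_right (by norm_num) h7)
      -- pigeonhole on X₁
            have hX₁card : 2 ^ F.card * (2 * K) ^ j ≤ X₁.card := by
              have e1 : X₁.card = X.card - 1 := Finset.card_erase_of_mem haX
              have e2 : (2 * K) ^ (j + 1) = 2 * K * (2 * K) ^ j := pow_succ' (2 * K) j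
              have e3 : 0 < (2 * K) ^ j := by positivity
              have : K * (2 * K) ^ j + 1 ≤ 2 * K * (2 * K) ^ j := by nlinarith
              have h8 : 2 ^ F.card * (2 * K) ^ j ≤ K * (2 * K) ^ j :=
                Nat.mul_le_mul_right _ hFcard
              omega
            obtain ⟨Y, hYX₁, hYcard, hYfib⟩ := pigeonFiber X₁ F f
              (fun v _ => Finset.filter_subset _ _) ((2 * K) ^ j) hX₁card
            have hYX : Y ⊆ X := hYX₁.trans (Finset.erase_subset _ _)
            -- invariants
            have inv1 : ∀ a' ∈ C', ∀ b ∈ Y, a' < b := by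
              intro a' ha' b hb
              rcases Finset.mem_insert.1 ha' with rfl | ha'
              · exact lt_of_le_of_ne (X.min'_le b (hYX hb))
                  (fun h => (Finset.mem_erase.1 (hYX₁ hb)).1 h.symm)
              · exact h1 a' ha' b (hYX hb)
            have inv2 : ∀ S ⊆ C', S.card = k → ∀ v ∈ Y, ∀ w ∈ Y,
                c (insert v S) = c (insert w S) := by
              intro S hS hSc v hv w hw
              have hSF : S ∈ F := Finset.mem_powersetCard.2 ⟨hS, hSc⟩
              have := hYfib v hv w hw
              apply boolEq
              constructor
              · intro hvS
                have : S ∈ f w := by rw [← this]; exact Finset.mem_filter.2 ⟨hSF, hvS⟩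
                exact (Finset.mem_filter.1 this).2
              · intro hwS
                have : S ∈ f v := by rw [this]; exact Finset.mem_filter.2 ⟨hSF, hwS⟩
                exact (Finset.mem_filter.1 this).2
            have inv3 : ∀ S ⊆ C', S.card = k → ∀ v ∈ C', (∀ s ∈ S, s < v) → ∀ w ∈ Y,
                c (insert v S) = c (insert w S) := by
              intro S hS hSc v hv hSv w hw
              have hSC : S ⊆ C := by
                intro s hs
                rcases Finset.mem_insert.1 (hS hs) with hsa | h
                · exfalso
                  have hsv : s < v := hSv s hs
                  rcases Finset.mem_insert.1 hv with hva | hvC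
                  · omega
                  · have : v < a := h1 v hvC a haX
                    omega
                · exact h
              rcases Finset.mem_insert.1 hv with hva | hvC
              · rw [hva]; exact h2 S hSC hSc a haX w (hYX hw)
              · exact h3 S hSC hSc v hvC hSv w (hYX hw)
            obtain ⟨C'', X'', hc1, hc2, hc3, hc4, hc5, hc6, hc7, hc8⟩ :=
              ihj C' Y (by omega) inv1 inv2 inv3 hYcard
            refine ⟨C'', X'', ?_, ?_, hc3.trans hYX, hc4, by omega, hc6, hc7, hc8⟩
            · exact (Finset.subset_insert a C).trans hc1
            · intro u hu
              rcases Finset.mem_union.1 (hc2 hu) with h | h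
              · rcases Finset.mem_insert.1 h with rfl | h
                · exact Finset.mem_union_right _ haX
                · exact Finset.mem_union_left _ h
              · exact Finset.mem_union_right _ (hYX h)
      -- preliminary pigeonhole
      set F₀ := Finset.powersetCard k (∅ : Finset ℕ) with hF₀
      set f₀ : ℕ → Finset (Finset ℕ) :=
        fun v => F₀.filter (fun S => c (insert v S) = true) with hf₀
      have hF₀card : 2 ^ F₀.card ≤ K := by
        have : F₀ ⊆ (∅ : Finset ℕ).powerset := fun S hS =>
          Finset.mem_powerset.2 (Finset.mem_powersetCard.1 hS).1
        have h6 : F₀.card ≤ 1 := by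
          calc F₀.card ≤ (∅ : Finset ℕ).powerset.card := Finset.card_le_card this
            _ = 1 := by simp
        calc 2 ^ F₀.card ≤ 2 ^ 1 := Nat.pow_le_pow_right (by norm_num) h6
          _ ≤ K := hK2
      obtain ⟨X₀, hX₀V, hX₀card, hX₀fib⟩ := pigeonFiber V F₀ f₀
        (fun v _ => Finset.filter_subset _ _) ((2 * K) ^ m)
        (le_trans (Nat.mul_le_mul_right _ hF₀card) hV)
      have qp0 : ∀ S ⊆ (∅ : Finset ℕ), S.card = k → ∀ v ∈ X₀, ∀ w ∈ X₀,
          c (insert v S) = c (insert w S) := by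
        intro S hS hSc v hv w hw
        have hS0 : S = ∅ := Finset.subset_empty.1 hS
        subst hS0
        have hSF : (∅ : Finset ℕ) ∈ F₀ := Finset.mem_powersetCard.2 ⟨Finset.Subset.refl _, hSc⟩
        have hfe := hX₀fib v hv w hw
        apply boolEq
        constructor
        · intro hvS
          have : (∅ : Finset ℕ) ∈ f₀ w := by rw [← hfe]; exact Finset.mem_filter.2 ⟨hSF, hvS⟩
          exact (Finset.mem_filter.1 this).2
        · intro hwS
          have : (∅ : Finset ℕ) ∈ f₀ v := by rw [hfe]; exact Finset.mem_filter.2 ⟨hSF, hwS⟩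
          exact (Finset.mem_filter.1 this).2
      obtain ⟨Cm, Xm, hg1, hg2, hg3, hg4, hg5, hg6, hg7, hg8⟩ :=
        greedy m ∅ X₀ (by simp) (by simp) qp0 (by simp) hX₀card
      have hCmV : Cm ⊆ V := by
        intro u hu
        rcases Finset.mem_union.1 (hg2 hu) with h | h
        · simp at h
        · exact hX₀V h
      have hCmcard : Cm.card = m := by simpa using hg5
      have hCmne : Cm.Nonempty := Finset.card_pos.1 (by omega)
      -- pre-homogeneity
      obtain ⟨w₀, hw₀⟩ := hg4
      have hP : ∀ S ⊆ Cm, S.card = k → ∀ v ∈ Cm, (∀ s ∈ S, s < v) →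
          ∀ w ∈ Cm, (∀ s ∈ S, s < w) → c (insert v S) = c (insert w S) := by
        intro S hS hSc v hv hSv w hw hSw
        rw [hg8 S hS hSc v hv hSv w₀ hw₀, hg8 S hS hSc w hw hSw w₀ hw₀]
      set c' : Finset ℕ → Bool := fun S =>
        if h : ((Cm.filter (fun v => ∀ s ∈ S, s < v)).Nonempty)
        then c (insert ((Cm.filter (fun v => ∀ s ∈ S, s < v)).min' h) S) else true with hc'
      set G := Cm.erase (Cm.max' hCmne) with hG
      have hGcard : R ≤ G.card := by
        rw [hG, Finset.card_erase_of_mem (Cm.max'_mem hCmne)]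
        omega
      obtain ⟨T, hTG, hTcard, x, hmono⟩ := hR c' G hGcard
      refine ⟨T, (hTG.trans (Finset.erase_subset _ _)).trans hCmV, hTcard, x, ?_⟩
      intro e he hec
      have hene : e.Nonempty := Finset.card_pos.1 (by omega)
      set v := e.max' hene with hv
      set S := e.erase v with hS
      have hSe : S ⊆ T := (Finset.erase_subset _ _).trans he
      have hScard : S.card = k := by
        rw [hS, Finset.card_erase_of_mem (e.max'_mem hene)]; omega
      have hins : insert v S = e := Finset.insert_erase (e.max'_mem hene)
      have hSv : ∀ s ∈ S, s < v := by
        intro s hs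
        have h1 := Finset.mem_erase.1 hs
        exact lt_of_le_of_ne (e.le_max' s h1.2) h1.1
      have hvCm : v ∈ Cm := (Finset.erase_subset _ _) (hTG (he (e.max'_mem hene)))
      set Fl := Cm.filter (fun u => ∀ s ∈ S, s < u) with hFl
      have hvFl : v ∈ Fl := Finset.mem_filter.2 ⟨hvCm, hSv⟩
      have hFlne : Fl.Nonempty := ⟨v, hvFl⟩
      have hbmem := Finset.mem_filter.1 (Fl.min'_mem hFlne)
      have hc'S : c' S = c (insert (Fl.min' hFlne) S) := dif_pos hFlne
      have hx : c' S = x := hmono S hSe hScard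
      have hPe := hP S (hSe.trans (hTG.trans (Finset.erase_subset _ _))) hScard v hvCm hSv
        (Fl.min' hFlne) hbmem.1 hbmem.2
      rw [← hins, hPe, ← hc'S, hx]


def boundE (t : ℕ) : ℕ → ℕ → ℕ
  | 0, _ => 1
  | r + 1, D => max (4 * D * (t + 1)) (boundE t r (2 * D * (4 * D) ^ t) + t)


lemma erdosBox (t : ℕ) : ∀ (r : ℕ) (V : Finset ℕ) (A : Finset (Finset ℕ)) (D : ℕ),
    1 ≤ D → A ⊆ V.powersetCard r → V.card ^ r ≤ A.card * D → boundE t r D ≤ V.card →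
    ∃ B : ℕ → Finset ℕ,
      (∀ i < r, B i ⊆ V ∧ (B i).card = t) ∧
      (∀ i < r, ∀ j < r, i ≠ j → Disjoint (B i) (B j)) ∧
      (∀ v : ℕ → ℕ, (∀ i < r, v i ∈ B i) → (range r).image v ∈ A) := by
  intro r
  induction r with
  | zero =>
      intro V A D hD hA hcard _
      have hAne : A.Nonempty := by
        rw [← Finset.card_pos]
        by_contra h
        push_neg at h
        interval_cases h' : A.card <;> simp_all
      obtain ⟨e, he⟩ := hAne
      have he0 : e = ∅ := by
        have := hA he
        rw [Finset.powersetCard_zero, Finset.mem_singleton] at this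
        exact this
      refine ⟨fun _ => ∅, fun i hi => absurd hi (Nat.not_lt_zero i),
        fun i hi => absurd hi (Nat.not_lt_zero i), fun v _ => ?_⟩
      simpa [he0] using he
  | succ r ih =>
      intro V A D hD hA hcard hbound
      set N := V.card with hN
      have hND : 4 * D * (t + 1) ≤ N := le_trans (le_max_left _ _) hbound
      have hbound2 : boundE t r (2 * D * (4 * D) ^ t) + t ≤ N := le_trans (le_max_right _ _) hbound
      have hNpos : 0 < N := by nlinarith
      have htN : t ≤ N := by nlinarith
      set Nb : Finset ℕ → Finset ℕ :=
        fun S => V.filter (fun v => v ∉ S ∧ insert v S ∈ A) with hNb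
      set d : Finset ℕ → ℕ := fun S => (Nb S).card with hd
      -- counting pairs (S, v)
      have hsum : ∑ S ∈ V.powersetCard r, d S = (r + 1) * A.card := by
        have h1 : ∑ S ∈ V.powersetCard r, d S = ((V.powersetCard r).sigma Nb).card :=
          (Finset.card_sigma _ _).symm
        have h2 : ((V.powersetCard r).sigma Nb).card = (A.sigma fun e => e).card := by
          apply Finset.card_bij (fun p _ => (⟨insert p.2 p.1, p.2⟩ : (_ : Finset ℕ) × ℕ))
          · rintro ⟨S, v⟩ hp
            rw [Finset.mem_sigma] at hp ⊢
            obtain ⟨hS, hv⟩ := hp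
            rw [Finset.mem_filter] at hv
            exact ⟨hv.2.2, Finset.mem_insert_self _ _⟩
          · rintro ⟨S, v⟩ hp ⟨S', v'⟩ hp' heq
            rw [Finset.mem_sigma, Finset.mem_filter] at hp hp'
            simp only [Sigma.mk.inj_iff] at heq
            obtain ⟨h1', h2'⟩ := heq
            have hvv : v = v' := eq_of_heq h2'
            subst hvv
            have : S = S' := by
              have e1 : (insert v S).erase v = S := Finset.erase_insert hp.2.2.1
              have e2 : (insert v S').erase v = S' := Finset.erase_insert hp'.2.2.1
              rw [← e1, h1', e2]
            simp [this]
          · rintro ⟨e, v⟩ hq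
            rw [Finset.mem_sigma] at hq
            obtain ⟨he, hv⟩ := hq
            have hemem := Finset.mem_powersetCard.1 (hA he)
            refine ⟨⟨e.erase v, v⟩, ?_, ?_⟩
            · rw [Finset.mem_sigma]
              constructor
              · rw [Finset.mem_powersetCard]
                refine ⟨(Finset.erase_subset _ _).trans hemem.1, ?_⟩
                rw [Finset.card_erase_of_mem hv, hemem.2]
                omega
              · rw [Finset.mem_filter]
                exact ⟨hemem.1 hv, Finset.notMem_erase _ _,
                  by rw [Finset.insert_erase hv]; exact he⟩
            · simp [Finset.insert_erase hv]
        have h3 : (A.sigma fun e => e).card = ∑ e ∈ A, e.card := Finset.card_sigma _ _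
        have h4 : ∑ e ∈ A, e.card = (r + 1) * A.card := by
          rw [Finset.sum_congr rfl (fun e he => (Finset.mem_powersetCard.1 (hA he)).2)]
          rw [Finset.sum_const, smul_eq_mul, mul_comm]
        rw [h1, h2, h3, h4]
      -- threshold
      set Sstar := (V.powersetCard r).filter (fun S => N ≤ 2 * D * d S) with hSs
      have hPowCard : (V.powersetCard r).card ≤ N ^ r := by
        rw [Finset.card_powersetCard]; exact Nat.choose_le_pow _ _
      have key1 : N ^ (r + 1) ≤ 2 * D * Sstar.card * N := by
        have hsplit := Finset.sum_filter_add_sum_filter_not (V.powersetCard r)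
          (fun S => N ≤ 2 * D * d S) d
        have hrest : ∑ S ∈ (V.powersetCard r).filter (fun S => ¬ (N ≤ 2 * D * d S)), (2 * D * d S)
            ≤ N ^ r * (N - 1) := by
          calc ∑ S ∈ (V.powersetCard r).filter (fun S => ¬ (N ≤ 2 * D * d S)), (2 * D * d S)
              ≤ ((V.powersetCard r).filter (fun S => ¬ (N ≤ 2 * D * d S))).card • (N - 1) := by
                apply Finset.sum_le_card_nsmul
                intro S hSmem
                have := (Finset.mem_filter.1 hSmem).2
                omega
            _ ≤ N ^ r * (N - 1) := by
                rw [smul_eq_mul]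
                exact Nat.mul_le_mul_right _
                  (le_trans (Finset.card_le_card (Finset.filter_subset _ _)) hPowCard)
        have hstar_le : ∑ S ∈ Sstar, d S ≤ Sstar.card * N := by
          calc ∑ S ∈ Sstar, d S ≤ Sstar.card • N := by
                apply Finset.sum_le_card_nsmul
                intro S _
                exact Finset.card_le_card (Finset.filter_subset _ _)
            _ = Sstar.card * N := by rw [smul_eq_mul]
        have htot : 2 * N ^ (r + 1) ≤ 2 * D * ((r + 1) * A.card) := by
          have h5 : 2 * N ^ (r + 1) ≤ 2 * (A.card * D) := by omega
          have h6 : 2 * (A.card * D) * 1 ≤ 2 * (A.card * D) * (r + 1) :=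
            Nat.mul_le_mul_left _ (by omega)
          calc 2 * N ^ (r + 1) ≤ 2 * (A.card * D) := h5
            _ ≤ 2 * (A.card * D) * (r + 1) := by simpa using h6
            _ = 2 * D * ((r + 1) * A.card) := by ring
        have e1 : 2 * D * (∑ S ∈ Sstar, d S) + 2 * D * (∑ S ∈ (V.powersetCard r).filter
            (fun S => ¬ (N ≤ 2 * D * d S)), d S) = 2 * D * ((r + 1) * A.card) := by
          rw [← Nat.mul_add, hsplit, hsum]
        have e2 : 2 * D * (∑ S ∈ (V.powersetCard r).filter
            (fun S => ¬ (N ≤ 2 * D * d S)), d S) ≤ N ^ r * (N - 1) := by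
          rw [Finset.mul_sum]
          exact hrest
        have e3 : N ^ r * (N - 1) + N ^ r ≤ N ^ (r + 1) + N ^ r := by
          have : N ^ r * (N - 1) ≤ N ^ r * N := Nat.mul_le_mul_left _ (Nat.sub_le _ _)
          calc N ^ r * (N - 1) + N ^ r ≤ N ^ r * N + N ^ r := by omega
            _ = N ^ (r + 1) + N ^ r := by ring_nf
        have e4 : 2 * D * (∑ S ∈ Sstar, d S) ≤ 2 * D * (Sstar.card * N) :=
          Nat.mul_le_mul_left _ hstar_le
        have : N ^ (r + 1) ≤ 2 * D * (Sstar.card * N) := by omega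
        calc N ^ (r + 1) ≤ 2 * D * (Sstar.card * N) := this
          _ = 2 * D * Sstar.card * N := by ring
      -- choose ratio bound
      have hchoose : ∀ S ∈ Sstar, N.choose t ≤ (4 * D) ^ t * (d S).choose t := by
        intro S hSmem
        have hdS : N ≤ 2 * D * d S := (Finset.mem_filter.1 hSmem).2
        have hdSt : 2 * (t + 1) ≤ d S := by
          have h1 : 2 * D * (2 * (t + 1)) ≤ 2 * D * d S := by
            calc 2 * D * (2 * (t + 1)) = 4 * D * (t + 1) := by ring
              _ ≤ N := hND
              _ ≤ 2 * D * d S := hdS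
          exact Nat.le_of_mul_le_mul_left h1 (by omega)
        have hfac : N.descFactorial t ≤ (4 * D) ^ t * (d S).descFactorial t := by
          have hre : (4 * D) ^ t * ∏ i ∈ range t, (d S - i) =
              ∏ i ∈ range t, (4 * D * (d S - i)) := by
            rw [Finset.prod_mul_distrib, Finset.prod_const, Finset.card_range]
          rw [Nat.descFactorial_eq_prod_range, Nat.descFactorial_eq_prod_range, hre]
          apply Finset.prod_le_prod (fun _ _ => Nat.zero_le _)
          intro i hi
          have hit : i < t := Finset.mem_range.1 hi
          have h1 : i ≤ d S := by omega
          have h2 : 4 * D * (d S - i) + 4 * D * i = 4 * D * d S := by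
            rw [← Nat.mul_add, Nat.sub_add_cancel h1]
          have h3 : 2 * N ≤ 2 * (2 * D * d S) := by omega
          have h4 : 4 * D * d S = 2 * (2 * D * d S) := by ring
          have h5 : 4 * D * i ≤ 4 * D * t := Nat.mul_le_mul_left _ (by omega)
          have h6 : 4 * D * t + 4 * D ≤ N := by
            calc 4 * D * t + 4 * D = 4 * D * (t + 1) := by ring
              _ ≤ N := hND
          omega
        rw [Nat.descFactorial_eq_factorial_mul_choose, Nat.descFactorial_eq_factorial_mul_choose]
          at hfac
        have : t.factorial * N.choose t ≤ t.factorial * ((4 * D) ^ t * (d S).choose t) := by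
          calc t.factorial * N.choose t ≤ (4 * D) ^ t * (t.factorial * (d S).choose t) := hfac
            _ = t.factorial * ((4 * D) ^ t * (d S).choose t) := by ring
        exact Nat.le_of_mul_le_mul_left this t.factorial_pos
      -- swap double counting
      have hswap : ∑ S ∈ Sstar, (d S).choose t =
          ∑ W ∈ V.powersetCard t, (Sstar.filter (fun S => W ⊆ Nb S)).card := by
        have h1 : ∑ S ∈ Sstar, (d S).choose t =
            (Sstar.sigma (fun S => (Nb S).powersetCard t)).card := by
          rw [Finset.card_sigma]
          apply Finset.sum_congr rfl
          intro S _
          rw [Finset.card_powersetCard]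
        have h2 : ∑ W ∈ V.powersetCard t, (Sstar.filter (fun S => W ⊆ Nb S)).card =
            ((V.powersetCard t).sigma (fun W => Sstar.filter (fun S => W ⊆ Nb S))).card :=
          (Finset.card_sigma _ _).symm
        rw [h1, h2]
        apply Finset.card_bij (fun p _ => (⟨p.2, p.1⟩ : (_ : Finset ℕ) × Finset ℕ))
        · rintro ⟨S, W⟩ hp
          rw [Finset.mem_sigma] at hp ⊢
          obtain ⟨hS, hW⟩ := hp
          rw [Finset.mem_powersetCard] at hW
          constructor
          · rw [Finset.mem_powersetCard]
            exact ⟨hW.1.trans (Finset.filter_subset _ _), hW.2⟩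
          · rw [Finset.mem_filter]
            exact ⟨hS, hW.1⟩
        · rintro ⟨S, W⟩ hp ⟨S', W'⟩ hp' heq
          simp only [Sigma.mk.inj_iff] at heq
          obtain ⟨e1', e2'⟩ := heq
          have := eq_of_heq e2'
          subst this; subst e1'
          rfl
        · rintro ⟨W, S⟩ hq
          rw [Finset.mem_sigma] at hq
          obtain ⟨hW, hS⟩ := hq
          rw [Finset.mem_filter] at hS
          refine ⟨⟨S, W⟩, ?_, rfl⟩
          rw [Finset.mem_sigma]
          refine ⟨hS.1, ?_⟩
          rw [Finset.mem_powersetCard]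
          exact ⟨hS.2, (Finset.mem_powersetCard.1 hW).2⟩
      -- the good W₀
      have hPne : (V.powersetCard t).Nonempty := by
        rw [← Finset.card_pos, Finset.card_powersetCard]
        exact Nat.choose_pos htN
      obtain ⟨W₀, hW₀mem, hW₀max⟩ := Finset.exists_max_image (V.powersetCard t)
        (fun W => (Sstar.filter (fun S => W ⊆ Nb S)).card) hPne
      set g := (Sstar.filter (fun S => W₀ ⊆ Nb S)).card with hg
      have hNct : 0 < N.choose t := Nat.choose_pos htN
      have key2 : Sstar.card ≤ (4 * D) ^ t * g := by
        have c1 : Sstar.card * N.choose t ≤ ∑ S ∈ Sstar, (4 * D) ^ t * (d S).choose t := by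
          calc Sstar.card * N.choose t = ∑ _S ∈ Sstar, N.choose t := by
                rw [Finset.sum_const, smul_eq_mul]
            _ ≤ ∑ S ∈ Sstar, (4 * D) ^ t * (d S).choose t := Finset.sum_le_sum hchoose
        have c2 : ∑ S ∈ Sstar, (4 * D) ^ t * (d S).choose t =
            (4 * D) ^ t * ∑ S ∈ Sstar, (d S).choose t := by rw [Finset.mul_sum]
        have c3 : ∑ W ∈ V.powersetCard t, (Sstar.filter (fun S => W ⊆ Nb S)).card ≤
            (V.powersetCard t).card * g := by
          calc ∑ W ∈ V.powersetCard t, (Sstar.filter (fun S => W ⊆ Nb S)).card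
              ≤ (V.powersetCard t).card • g := Finset.sum_le_card_nsmul _ _ _ hW₀max
            _ = (V.powersetCard t).card * g := by rw [smul_eq_mul]
        have c4 : (V.powersetCard t).card = N.choose t := Finset.card_powersetCard _ _
        have c5 : Sstar.card * N.choose t ≤ (4 * D) ^ t * g * N.choose t := by
          calc Sstar.card * N.choose t ≤ (4 * D) ^ t * ∑ S ∈ Sstar, (d S).choose t := by
                rw [← c2]; exact c1
            _ = (4 * D) ^ t * ∑ W ∈ V.powersetCard t, (Sstar.filter (fun S => W ⊆ Nb S)).card := by
                rw [hswap]
            _ ≤ (4 * D) ^ t * ((V.powersetCard t).card * g) := Nat.mul_le_mul_left _ c3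
            _ = (4 * D) ^ t * g * N.choose t := by rw [c4]; ring
        exact Nat.le_of_mul_le_mul_right c5 hNct
      -- recursion setup
      set D' := 2 * D * (4 * D) ^ t with hD'
      set V' := V \ W₀ with hV'
      set A' := Sstar.filter (fun S => W₀ ⊆ Nb S) with hA'
      have hW₀ := Finset.mem_powersetCard.1 hW₀mem
      have hV'card : V'.card = N - t := by
        rw [hV', Finset.card_sdiff_of_subset hW₀.1, hW₀.2]
      have hA'sub : A' ⊆ V'.powersetCard r := by
        intro S hSmem
        rw [hA', Finset.mem_filter] at hSmem
        obtain ⟨hS1, hS2⟩ := hSmem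
        have hS3 := Finset.mem_powersetCard.1 ((Finset.filter_subset _ _) hS1)
        rw [Finset.mem_powersetCard]
        refine ⟨?_, hS3.2⟩
        intro u hu
        rw [hV', Finset.mem_sdiff]
        refine ⟨hS3.1 hu, fun huW => ?_⟩
        have := (Finset.mem_filter.1 (hS2 huW)).2.1
        exact this hu
      have hcard' : V'.card ^ r ≤ A'.card * D' := by
        have c6 : N ^ (r + 1) ≤ D' * g * N := by
          calc N ^ (r + 1) ≤ 2 * D * Sstar.card * N := key1
            _ ≤ 2 * D * ((4 * D) ^ t * g) * N := by
                apply Nat.mul_le_mul_right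
                exact Nat.mul_le_mul_left _ key2
            _ = D' * g * N := by rw [hD']; ring
        have c7 : N ^ r ≤ D' * g := by
          have : N ^ r * N ≤ D' * g * N := by
            calc N ^ r * N = N ^ (r + 1) := by ring
              _ ≤ D' * g * N := c6
          exact Nat.le_of_mul_le_mul_right this hNpos
        calc V'.card ^ r ≤ N ^ r := Nat.pow_le_pow_left (by rw [hV'card]; omega) r
          _ ≤ D' * g := c7
          _ = A'.card * D' := by rw [hg]; ring
      have hbound' : boundE t r D' ≤ V'.card := by rw [hV'card]; omega
      have hD'1 : 1 ≤ D' := by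
        have : 0 < 2 * D * (4 * D) ^ t := by positivity
        omega
      obtain ⟨B', hB'1, hB'2, hB'3⟩ := ih V' A' D' hD'1 hA'sub hcard' hbound'
      refine ⟨fun i => if i = r then W₀ else B' i, ?_, ?_, ?_⟩
      · intro i hi
        by_cases hir : i = r
        · simp only [hir, if_pos rfl]
          exact ⟨hW₀.1, hW₀.2⟩
        · have hi' : i < r := by omega
          simp only [if_neg hir]
          exact ⟨(hB'1 i hi').1.trans (Finset.sdiff_subset), (hB'1 i hi').2⟩
      · intro i hi j hj hij
        by_cases hir : i = r <;> by_cases hjr : j = r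
        · omega
        · simp only [hir, if_pos rfl, if_neg hjr]
          have hj' : j < r := by omega
          rw [Finset.disjoint_right]
          intro u hu
          have := (hB'1 j hj').1 hu
          rw [hV', Finset.mem_sdiff] at this
          exact this.2
        · simp only [if_neg hir, hjr, if_pos rfl]
          have hi' : i < r := by omega
          rw [Finset.disjoint_left]
          intro u hu
          have := (hB'1 i hi').1 hu
          rw [hV', Finset.mem_sdiff] at this
          exact this.2
        · simp only [if_neg hir, if_neg hjr]
          exact hB'2 i (by omega) j (by omega) hij
      · intro v hv
        have hvr : v r ∈ W₀ := by
          have := hv r (by omega)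
          simpa using this
        have hv' : ∀ i < r, v i ∈ B' i := by
          intro i hi
          have := hv i (by omega)
          simpa [Nat.ne_of_lt hi] using this
        have hS := hB'3 v hv'
        rw [hA', Finset.mem_filter] at hS
        have himg : (range (r + 1)).image v = insert (v r) ((range r).image v) := by
          rw [Finset.range_add_one, Finset.image_insert]
        rw [himg]
        have := hS.2 hvr
        exact (Finset.mem_filter.1 this).2.2


lemma extract (n : ℕ) (hn : 1 ≤ n) : ∀ (x : ℕ) (B : ℕ → Finset ℕ) (A : Finset (Finset ℕ)),
    (∀ i < x, x * n ≤ (B i).card) →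
    (∀ i < x, ∀ j < x, i ≠ j → Disjoint (B i) (B j)) →
    (∀ v : ℕ → ℕ, (∀ i < x, v i ∈ B i) → (range x).image v ∈ A) →
    ∃ D : ℕ → Finset ℕ,
      (∀ j < x, (D j).card = n ∧ D j ⊆ (range x).biUnion B) ∧
      (∀ j₁ j₂, j₁ < j₂ → j₂ < x → ∀ a ∈ D j₁, ∀ b ∈ D j₂, a < b) ∧
      (∀ v : ℕ → ℕ, (∀ j < x, v j ∈ D j) → (range x).image v ∈ A) := by
  intro x
  induction x with
  | zero =>
      intro B A hc hd ht
      refine ⟨fun _ => ∅, fun j hj => absurd hj (Nat.not_lt_zero j),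
        fun j₁ j₂ h1 h2 => absurd h2 (Nat.not_lt_zero j₂), fun v _ => ?_⟩
      simpa using ht (fun _ => 0) (fun i hi => absurd hi (Nat.not_lt_zero i))
  | succ x ihx =>
      intro B A hc hd ht
      have hB0card : (x + 1) * n ≤ (B 0).card := hc 0 (by omega)
      have hB0ne : (B 0).Nonempty := by
        rw [← Finset.card_pos]
        nlinarith
      -- the threshold m
      set M := {m : ℕ | ∃ i < x + 1, n ≤ ((B i).filter (fun a => a ≤ m)).card} with hMdef
      have hMne : ((B 0).max' hB0ne) ∈ M := by
        refine ⟨0, by omega, ?_⟩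
        have he : (B 0).filter (fun a => a ≤ (B 0).max' hB0ne) = B 0 :=
          Finset.filter_true_of_mem (fun a ha => Finset.le_max' _ a ha)
        rw [he]
        nlinarith
      set m := sInf M with hmdef
      obtain ⟨i₀, hi₀x, hi₀⟩ : m ∈ M := Nat.sInf_mem ⟨_, hMne⟩
      have hmin : ∀ i < x + 1, ((B i).filter (fun a => a < m)).card < n := by
        intro i hi
        by_contra hge
        push_neg at hge
        have hm1 : 1 ≤ m := by
          rcases Nat.eq_zero_or_pos m with h0 | h1
          · exfalso
            have he : (B i).filter (fun a => a < m) = ∅ := by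
              rw [h0]
              apply Finset.filter_false_of_mem
              intro a _
              omega
            rw [he] at hge
            simp at hge
            omega
          · exact h1
        have hmem : m - 1 ∈ M := by
          refine ⟨i, hi, ?_⟩
          have he : (B i).filter (fun a => a ≤ m - 1) = (B i).filter (fun a => a < m) := by
            ext a
            simp only [Finset.mem_filter]
            constructor
            · rintro ⟨h1, h2⟩; exact ⟨h1, by omega⟩
            · rintro ⟨h1, h2⟩; exact ⟨h1, by omega⟩
          rw [he]
          exact hge
        have := Nat.sInf_le hmem
        omega
      have hcount : ∀ i < x + 1, ((B i).filter (fun a => a ≤ m)).card ≤ n := by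
        intro i hi
        have hsub : (B i).filter (fun a => a ≤ m) ⊆ insert m ((B i).filter (fun a => a < m)) := by
          intro a ha
          rw [Finset.mem_filter] at ha
          rcases eq_or_lt_of_le ha.2 with h | h
          · rw [h]; exact Finset.mem_insert_self _ _
          · exact Finset.mem_insert_of_mem (Finset.mem_filter.2 ⟨ha.1, h⟩)
        have h1 := Finset.card_le_card hsub
        have h2 := Finset.card_insert_le m ((B i).filter (fun a => a < m))
        have h3 := hmin i hi
        omega
      set D0 := (B i₀).filter (fun a => a ≤ m) with hD0
      have hD0card : D0.card = n := le_antisymm (hcount i₀ hi₀x) hi₀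
      have hmB : m ∈ B i₀ := by
        by_contra hnm
        have he : (B i₀).filter (fun a => a ≤ m) = (B i₀).filter (fun a => a < m) := by
          ext a
          simp only [Finset.mem_filter]
          constructor
          · rintro ⟨h1, h2⟩
            refine ⟨h1, ?_⟩
            rcases eq_or_lt_of_le h2 with h | h
            · exact absurd (h ▸ h1) hnm
            · exact h
          · rintro ⟨h1, h2⟩; exact ⟨h1, le_of_lt h2⟩
        have h9 := hmin i₀ hi₀x
        rw [← he] at h9
        rw [← hD0] at h9
        omega
      have hother : ∀ i < x + 1, i ≠ i₀ → ((B i).filter (fun a => a ≤ m)).card < n := by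
        intro i hi hne
        have hmB' : m ∉ B i := fun hmem =>
          (Finset.disjoint_left.1 (hd i hi i₀ hi₀x hne)) hmem hmB
        have he : (B i).filter (fun a => a ≤ m) = (B i).filter (fun a => a < m) := by
          ext a
          simp only [Finset.mem_filter]
          constructor
          · rintro ⟨h1, h2⟩
            refine ⟨h1, ?_⟩
            rcases eq_or_lt_of_le h2 with h | h
            · exact absurd (h ▸ h1) hmB'
            · exact h
          · rintro ⟨h1, h2⟩; exact ⟨h1, le_of_lt h2⟩
        rw [he]
        exact hmin i hi
      -- reindexing
      set ρ : ℕ → ℕ := fun j => if j < i₀ then j else j + 1 with hρ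
      have hρlt : ∀ j < x, ρ j < x + 1 := by
        intro j hj
        simp only [hρ]
        split_ifs <;> omega
      have hρne : ∀ j < x, ρ j ≠ i₀ := by
        intro j hj
        simp only [hρ]
        split_ifs <;> omega
      have hρinj : ∀ a b, a ≠ b → ρ a ≠ ρ b := by
        intro a b hab
        simp only [hρ]
        split_ifs <;> omega
      set B' : ℕ → Finset ℕ := fun j => (B (ρ j)).filter (fun a => ¬ a ≤ m) with hB'
      have hc' : ∀ j < x, x * n ≤ (B' j).card := by
        intro j hj
        have hsplit := Finset.card_filter_add_card_filter_not
          (s := B (ρ j)) (p := fun a => a ≤ m)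
        have h1 := hc (ρ j) (hρlt j hj)
        have h2 := hother (ρ j) (hρlt j hj) (hρne j hj)
        simp only [hB']
        nlinarith [hsplit]
      have hd' : ∀ i < x, ∀ j < x, i ≠ j → Disjoint (B' i) (B' j) := by
        intro i hi j hj hij
        apply Finset.disjoint_of_subset_left (Finset.filter_subset _ _)
        apply Finset.disjoint_of_subset_right (Finset.filter_subset _ _)
        exact hd (ρ i) (hρlt i hi) (ρ j) (hρlt j hj) (hρinj i j hij)
      set A' := (((range (x + 1)).biUnion B).powerset).filter
        (fun s => ∀ a ∈ D0, insert a s ∈ A) with hA'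
      have ht' : ∀ v : ℕ → ℕ, (∀ j < x, v j ∈ B' j) → (range x).image v ∈ A' := by
        intro v' hv'
        rw [hA', Finset.mem_filter]
        constructor
        · rw [Finset.mem_powerset]
          intro u hu
          obtain ⟨j, hj, hju⟩ := Finset.mem_image.1 hu
          rw [Finset.mem_range] at hj
          rw [Finset.mem_biUnion]
          exact ⟨ρ j, Finset.mem_range.2 (hρlt j hj), hju ▸ (Finset.filter_subset _ _) (hv' j hj)⟩
        · intro a ha
          set w : ℕ → ℕ := fun i => if i = i₀ then a else v' (if i < i₀ then i else i - 1)
            with hw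
          have hwmem : ∀ i < x + 1, w i ∈ B i := by
            intro i hi
            by_cases hii : i = i₀
            · simp only [hw, hii, if_pos rfl]
              exact (Finset.filter_subset _ _) ha
            · simp only [hw, if_neg hii]
              by_cases hlt : i < i₀
              · simp only [if_pos hlt]
                have h5 : ρ i = i := by simp only [hρ, if_pos hlt]
                have h6 : i < x := by omega
                have := (Finset.filter_subset _ _) (hv' i h6)
                rwa [h5] at this
              · simp only [if_neg hlt]
                have h7 : i₀ < i := by omega
                have h5 : ρ (i - 1) = i := by
                  simp only [hρ]
                  have : ¬ (i - 1 < i₀) := by omega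
                  rw [if_neg this]
                  omega
                have h6 : i - 1 < x := by omega
                have := (Finset.filter_subset _ _) (hv' (i - 1) h6)
                rwa [h5] at this
          have himg : (range (x + 1)).image w = insert a ((range x).image v') := by
            ext u
            rw [Finset.mem_image, Finset.mem_insert, Finset.mem_image]
            constructor
            · rintro ⟨i, hi, hiu⟩
              rw [Finset.mem_range] at hi
              by_cases hii : i = i₀
              · left
                rw [← hiu]
                simp [hw, hii]
              · right
                refine ⟨if i < i₀ then i else i - 1, ?_, ?_⟩
                · rw [Finset.mem_range]
                  split_ifs <;> omega
                · rw [← hiu]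
                  simp [hw, if_neg hii]
            · rintro (rfl | ⟨j, hj, hju⟩)
              · exact ⟨i₀, Finset.mem_range.2 (by omega), by simp [hw]⟩
              · rw [Finset.mem_range] at hj
                refine ⟨ρ j, Finset.mem_range.2 (hρlt j hj), ?_⟩
                have h8 : ρ j ≠ i₀ := hρne j hj
                have h9 : (if ρ j < i₀ then ρ j else ρ j - 1) = j := by
                  simp only [hρ]
                  split_ifs <;> omega
                simp only [hw, if_neg h8, h9]
                exact hju
          rw [← himg]
          exact ht w hwmem
      obtain ⟨D', hD'1, hD'2, hD'3⟩ := ihx B' A' hc' hd' ht'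
      refine ⟨fun j => if j = 0 then D0 else D' (j - 1), ?_, ?_, ?_⟩
      · intro j hj
        by_cases hj0 : j = 0
        · simp only [hj0, if_pos rfl]
          refine ⟨hD0card, ?_⟩
          intro a ha
          rw [Finset.mem_biUnion]
          exact ⟨i₀, Finset.mem_range.2 hi₀x, (Finset.filter_subset _ _) ha⟩
        · simp only [if_neg hj0]
          have hj1 : j - 1 < x := by omega
          refine ⟨(hD'1 (j - 1) hj1).1, ?_⟩
          intro a ha
          have := (hD'1 (j - 1) hj1).2 ha
          rw [Finset.mem_biUnion] at this ⊢
          obtain ⟨i, hi, hai⟩ := this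
          rw [Finset.mem_range] at hi
          exact ⟨ρ i, Finset.mem_range.2 (hρlt i hi), (Finset.filter_subset _ _) hai⟩
      · intro j₁ j₂ h12 h2x a ha b hb
        by_cases hj0 : j₁ = 0
        · simp only [hj0, if_pos rfl] at ha
          have hbm : ¬ b ≤ m := by
            have hj2 : j₂ ≠ 0 := by omega
            simp only [if_neg hj2] at hb
            have := (hD'1 (j₂ - 1) (by omega)).2 hb
            rw [Finset.mem_biUnion] at this
            obtain ⟨i, _, hbi⟩ := this
            exact (Finset.mem_filter.1 hbi).2
          have ham : a ≤ m := (Finset.mem_filter.1 ha).2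
          omega
        · have hj2 : j₂ ≠ 0 := by omega
          simp only [if_neg hj0] at ha
          simp only [if_neg hj2] at hb
          exact hD'2 (j₁ - 1) (j₂ - 1) (by omega) (by omega) a ha b hb
      · intro v hv
        have hv0 : v 0 ∈ D0 := by
          have := hv 0 (by omega)
          simpa using this
        have hv' : ∀ j < x, v (j + 1) ∈ D' j := by
          intro j hj
          have := hv (j + 1) (by omega)
          simpa using this
        have hS' := hD'3 (fun j => v (j + 1)) hv'
        rw [hA', Finset.mem_filter] at hS'
        have himg : (range (x + 1)).image v =
            insert (v 0) ((range x).image (fun j => v (j + 1))) := by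
          ext u
          rw [Finset.mem_image, Finset.mem_insert, Finset.mem_image]
          constructor
          · rintro ⟨i, hi, hiu⟩
            rw [Finset.mem_range] at hi
            rcases Nat.eq_zero_or_pos i with h0 | h1
            · left; rw [← hiu, h0]
            · right
              exact ⟨i - 1, Finset.mem_range.2 (by omega), by
                have : i - 1 + 1 = i := by omega
                rw [this]; exact hiu⟩
          · rintro (rfl | ⟨j, hj, hju⟩)
            · exact ⟨0, Finset.mem_range.2 (by omega), rfl⟩
            · rw [Finset.mem_range] at hj
              exact ⟨j + 1, Finset.mem_range.2 (by omega), hju⟩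
        rw [himg]
        exact hS'.2 (v 0) hv0


lemma averaging (k x R : ℕ) (hxR : x ≤ R)
    (hRam : ∀ (c : Finset ℕ → Bool) (V : Finset ℕ), R ≤ V.card →
      ∃ T, T ⊆ V ∧ T.card = x ∧ ∃ b, ∀ e ⊆ T, e.card = k → c e = b)
    (N : ℕ) (hN : 2 * R ≤ N) (c : Finset ℕ → Bool) :
    ∃ b : Bool,
      N ^ x ≤ (((range N).powersetCard x).filter
        (fun T => ∀ e ⊆ T, e.card = k → c e = b)).card *
        (2 ^ (x + 1) * x.factorial * R.choose x) := by
  set V := range N with hV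
  have hVcard : V.card = N := card_range N
  set M := (V.powersetCard x).filter (fun T => ∃ b, ∀ e ⊆ T, e.card = k → c e = b) with hM
  set F : Finset ℕ → Finset ℕ × Finset ℕ := fun Q =>
    if h : R ≤ Q.card then
      ((hRam c Q h).choose, Q \ (hRam c Q h).choose)
    else (∅, ∅) with hF
  have hinj : (V.powersetCard R).card ≤ (M ×ˢ (V.powersetCard (R - x))).card := by
    apply Finset.card_le_card_of_injOn F
    · intro Q hQ
      rw [Finset.mem_coe, Finset.mem_powersetCard] at hQ
      have hcond : R ≤ Q.card := hQ.2.ge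
      obtain ⟨hT1, hT2, hT3⟩ := (hRam c Q hcond).choose_spec
      simp only [hF, dif_pos hcond]
      rw [Finset.mem_coe, Finset.mem_product]
      constructor
      · rw [hM, Finset.mem_filter, Finset.mem_powersetCard]
        exact ⟨⟨hT1.trans hQ.1, hT2⟩, hT3⟩
      · rw [Finset.mem_powersetCard]
        refine ⟨(Finset.sdiff_subset).trans hQ.1, ?_⟩
        rw [Finset.card_sdiff_of_subset hT1, hQ.2, hT2]
    · intro Q hQ Q' hQ' heq
      rw [Finset.mem_coe, Finset.mem_powersetCard] at hQ hQ'
      have hcond : R ≤ Q.card := hQ.2.ge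
      have hcond' : R ≤ Q'.card := hQ'.2.ge
      obtain ⟨hT1, hT2, hT3⟩ := (hRam c Q hcond).choose_spec
      obtain ⟨hT1', hT2', hT3'⟩ := (hRam c Q' hcond').choose_spec
      simp only [hF, dif_pos hcond, dif_pos hcond', Prod.mk.injEq] at heq
      have e1 : Q = (hRam c Q hcond).choose ∪ (Q \ (hRam c Q hcond).choose) :=
        (Finset.union_sdiff_of_subset hT1).symm
      have e2 : Q' = (hRam c Q' hcond').choose ∪ (Q' \ (hRam c Q' hcond').choose) :=
        (Finset.union_sdiff_of_subset hT1').symm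
      rw [heq.2, heq.1] at e1
      exact e1.trans e2.symm
  rw [Finset.card_product] at hinj
  rw [Finset.card_powersetCard, Finset.card_powersetCard, hVcard] at hinj
  -- the binomial identity
  have hRN : R ≤ N := by omega
  have hid : N.choose R * R.choose x = N.choose (R - x) * (N - (R - x)).choose x := by
    have h1 := Nat.choose_mul (n := N) (Nat.sub_le R x)
    rw [Nat.choose_symm hxR] at h1
    have h2 : R - (R - x) = x := by omega
    rw [h2] at h1
    exact h1
  have hposNRx : 0 < N.choose (R - x) := Nat.choose_pos (by omega)
  have hkey : (N - (R - x)).choose x ≤ M.card * R.choose x := by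
    have h3 : N.choose (R - x) * (N - (R - x)).choose x ≤
        N.choose (R - x) * (M.card * R.choose x) := by
      calc N.choose (R - x) * (N - (R - x)).choose x = N.choose R * R.choose x := hid.symm
        _ ≤ M.card * N.choose (R - x) * R.choose x :=
            Nat.mul_le_mul_right _ hinj
        _ = N.choose (R - x) * (M.card * R.choose x) := by ring
    exact Nat.le_of_mul_le_mul_left h3 hposNRx
  -- descFactorial lower bound
  have hdesc : (N - R + 1) ^ x ≤ x.factorial * (N - (R - x)).choose x := by
    rw [← Nat.descFactorial_eq_factorial_mul_choose]
    rw [Nat.descFactorial_eq_prod_range]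
    have : (N - R + 1) ^ x = ∏ _i ∈ range x, (N - R + 1) := by
      rw [Finset.prod_const, Finset.card_range]
    rw [this]
    apply Finset.prod_le_prod (fun _ _ => Nat.zero_le _)
    intro i hi
    have := Finset.mem_range.1 hi
    omega
  have hNx : N ^ x ≤ 2 ^ x * (N - R + 1) ^ x := by
    have h4 : N ≤ 2 * (N - R + 1) := by omega
    calc N ^ x ≤ (2 * (N - R + 1)) ^ x := Nat.pow_le_pow_left h4 x
      _ = 2 ^ x * (N - R + 1) ^ x := mul_pow 2 _ x
  have hMlow : N ^ x ≤ 2 ^ x * x.factorial * R.choose x * M.card := by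
    calc N ^ x ≤ 2 ^ x * (N - R + 1) ^ x := hNx
      _ ≤ 2 ^ x * (x.factorial * (N - (R - x)).choose x) := Nat.mul_le_mul_left _ hdesc
      _ ≤ 2 ^ x * (x.factorial * (M.card * R.choose x)) :=
          Nat.mul_le_mul_left _ (Nat.mul_le_mul_left _ hkey)
      _ = 2 ^ x * x.factorial * R.choose x * M.card := by ring
  -- majority color
  set Mt := (V.powersetCard x).filter (fun T => ∀ e ⊆ T, e.card = k → c e = true) with hMt
  set Mf := (V.powersetCard x).filter (fun T => ∀ e ⊆ T, e.card = k → c e = false) with hMf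
  have hMsub : M ⊆ Mt ∪ Mf := by
    intro T hT
    rw [hM, Finset.mem_filter] at hT
    obtain ⟨hT1, b, hb⟩ := hT
    rcases b with _ | _
    · exact Finset.mem_union_right _ (Finset.mem_filter.2 ⟨hT1, hb⟩)
    · exact Finset.mem_union_left _ (Finset.mem_filter.2 ⟨hT1, hb⟩)
  have hMcard : M.card ≤ Mt.card + Mf.card :=
    le_trans (Finset.card_le_card hMsub) (Finset.card_union_le _ _)
  have hmaj : ∃ b : Bool, M.card ≤ 2 * ((V.powersetCard x).filter
      (fun T => ∀ e ⊆ T, e.card = k → c e = b)).card := by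
    by_cases hc1 : M.card ≤ 2 * Mt.card
    · refine ⟨true, ?_⟩
      rw [← hMt]
      exact hc1
    · refine ⟨false, ?_⟩
      rw [← hMf]
      push_neg at hc1
      omega
  obtain ⟨b, hb⟩ := hmaj
  refine ⟨b, ?_⟩
  calc N ^ x ≤ 2 ^ x * x.factorial * R.choose x * M.card := hMlow
    _ ≤ 2 ^ x * x.factorial * R.choose x * (2 * ((V.powersetCard x).filter
        (fun T => ∀ e ⊆ T, e.card = k → c e = b)).card) := Nat.mul_le_mul_left _ hb
    _ = ((V.powersetCard x).filter
        (fun T => ∀ e ⊆ T, e.card = k → c e = b)).card * (2 ^ (x + 1) * x.factorial * R.choose x) := by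
        ring


lemma le_two_pow' (a : ℕ) : a ≤ 2 ^ a := (Nat.lt_two_pow_self (n := a)).le


lemma add_le_two_pow {a b p q : ℕ} (ha : a ≤ 2 ^ p) (hb : b ≤ 2 ^ q) :
    a + b ≤ 2 ^ (p + q + 1) := by
  have h1 : 2 ^ p ≤ 2 ^ (p + q) := Nat.pow_le_pow_right (by norm_num) (by omega)
  have h2 : 2 ^ q ≤ 2 ^ (p + q) := Nat.pow_le_pow_right (by norm_num) (by omega)
  have h3 : 2 ^ (p + q + 1) = 2 ^ (p + q) + 2 ^ (p + q) := by ring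
  omega


lemma mul_le_two_pow {a b p q : ℕ} (ha : a ≤ 2 ^ p) (hb : b ≤ 2 ^ q) :
    a * b ≤ 2 ^ (p + q) := by
  calc a * b ≤ 2 ^ p * 2 ^ q := Nat.mul_le_mul ha hb
    _ = 2 ^ (p + q) := (pow_add 2 p q).symm


lemma boundE_le (t : ℕ) : ∀ (r D : ℕ), 1 ≤ D → 1 ≤ r →
    boundE t r D ≤ (4 * D) ^ ((t + 3) ^ (r - 1)) * (t + 1) + t * r := by
  intro r
  induction r with
  | zero => intro D _ h; omega
  | succ r ihr =>
      intro D hD _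
      rcases Nat.eq_zero_or_pos r with hr0 | hr1
      · subst hr0
        show max (4 * D * (t + 1)) (boundE t 0 (2 * D * (4 * D) ^ t) + t) ≤ _
        have he : boundE t 0 (2 * D * (4 * D) ^ t) = 1 := rfl
        rw [he]
        have h1 : (4 * D) ^ ((t + 3) ^ (1 - 1)) = 4 * D := by norm_num
        rw [h1]
        have : 0 < 4 * D * (t + 1) := by positivity
        rw [max_le_iff]
        omega
      · show max (4 * D * (t + 1)) (boundE t r (2 * D * (4 * D) ^ t) + t) ≤ _
        set D' := 2 * D * (4 * D) ^ t with hD'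
        have hD'1 : 1 ≤ D' := by
          have : 0 < 2 * D * (4 * D) ^ t := by positivity
          omega
        have hIH := ihr D' hD'1 hr1
        have hkey : (4 * D') ^ ((t + 3) ^ (r - 1)) ≤ (4 * D) ^ ((t + 3) ^ r) := by
          have h2 : 4 * D' ≤ (4 * D) ^ (t + 2) := by
            calc 4 * D' = 8 * D * (4 * D) ^ t := by rw [hD']; ring
              _ ≤ (4 * D) ^ 2 * (4 * D) ^ t := by
                  have : 8 * D ≤ (4 * D) ^ 2 := by nlinarith
                  exact Nat.mul_le_mul_right _ this
              _ = (4 * D) ^ (t + 2) := by rw [← pow_add]; ring_nf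
          calc (4 * D') ^ ((t + 3) ^ (r - 1)) ≤ ((4 * D) ^ (t + 2)) ^ ((t + 3) ^ (r - 1)) :=
                Nat.pow_le_pow_left h2 _
            _ = (4 * D) ^ ((t + 2) * (t + 3) ^ (r - 1)) := by rw [← pow_mul]
            _ ≤ (4 * D) ^ ((t + 3) ^ r) := by
                apply Nat.pow_le_pow_right (by omega)
                calc (t + 2) * (t + 3) ^ (r - 1) ≤ (t + 3) * (t + 3) ^ (r - 1) :=
                      Nat.mul_le_mul_right _ (by omega)
                  _ = (t + 3) ^ (r - 1 + 1) := (pow_succ' _ _).symm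
                  _ = (t + 3) ^ r := by congr 1; omega
        have h7 : (t + 3) ^ (r + 1 - 1) = (t + 3) ^ r := by congr 1
        rw [h7, max_le_iff]
        constructor
        · have h3 : 4 * D ≤ (4 * D) ^ ((t + 3) ^ r) := by
            apply Nat.le_self_pow
            positivity
          have h3' := Nat.mul_le_mul_right (t + 1) h3
          omega
        · have h4 : boundE t r D' + t ≤ (4 * D') ^ ((t + 3) ^ (r - 1)) * (t + 1) + t * r + t := by
            omega
          have h5 : (4 * D') ^ ((t + 3) ^ (r - 1)) * (t + 1) ≤
              (4 * D) ^ ((t + 3) ^ r) * (t + 1) := Nat.mul_le_mul_right _ hkey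
          have h6 : t * r + t = t * (r + 1) := by ring
          omega


lemma mainNat (k x : ℕ) (hk : 2 ≤ k) (hx : k ≤ x) :
    ∃ Kc : ℕ, 1 ≤ Kc ∧ ∀ n : ℕ, 1 ≤ n → ∀ c : Finset ℕ → Bool,
      ∃ (D : ℕ → Finset ℕ) (b : Bool),
        (∀ j < x, (D j).card = n ∧ D j ⊆ range (2 ^ (Kc * n ^ (x - 1)))) ∧
        (∀ j₁ j₂, j₁ < j₂ → j₂ < x → ∀ a ∈ D j₁, ∀ a' ∈ D j₂, a < a') ∧
        (∀ s : Finset ℕ, s.card = k → (∀ u ∈ s, ∃ j < x, u ∈ D j) →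
          (∀ j < x, (s ∩ D j).card ≤ 1) → c s = b) := by
  obtain ⟨R₀, hR₀⟩ := hyperRamsey k x
  set R := max R₀ x with hR
  have hRam : ∀ (c : Finset ℕ → Bool) (V : Finset ℕ), R ≤ V.card →
      ∃ T, T ⊆ V ∧ T.card = x ∧ ∃ b, ∀ e ⊆ T, e.card = k → c e = b :=
    fun c V h => hR₀ c V (le_trans (le_max_left _ _) h)
  have hxR : x ≤ R := le_max_right _ _
  set D₀ := 2 ^ (x + 1) * x.factorial * R.choose x with hD₀
  have hD₀pos : 1 ≤ D₀ := by
    have h1 : 0 < 2 ^ (x + 1) := by positivity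
    have h2 : 0 < x.factorial := x.factorial_pos
    have h3 : 0 < R.choose x := Nat.choose_pos hxR
    calc 1 = 1 * 1 * 1 := by norm_num
      _ ≤ 2 ^ (x + 1) * x.factorial * R.choose x := by
          exact Nat.mul_le_mul (Nat.mul_le_mul h1 h2) h3
  have hx1 : 1 ≤ x := by omega
  set Kc := 4 * D₀ * (x + 3) ^ (x - 1) + (x + 1) + x * x + 2 * R + 2 with hKc
  refine ⟨Kc, by omega, ?_⟩
  intro n hn c
  set t := x * n with ht
  set Ng := 2 ^ (Kc * n ^ (x - 1)) with hNg
  -- arithmetic requirements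
  have hn1 : 1 ≤ n ^ (x - 1) := Nat.one_le_pow _ _ (by omega)
  have hnn : n ≤ n ^ (x - 1) := Nat.le_self_pow (by omega) n
  have hreq : boundE t x D₀ + 2 * R ≤ Ng := by
    have h1 := boundE_le t x D₀ hD₀pos hx1
    have ht3 : (t + 3) ^ (x - 1) ≤ (x + 3) ^ (x - 1) * n ^ (x - 1) := by
      calc (t + 3) ^ (x - 1) ≤ ((x + 3) * n) ^ (x - 1) := by
            apply Nat.pow_le_pow_left
            rw [ht]
            nlinarith
        _ = (x + 3) ^ (x - 1) * n ^ (x - 1) := mul_pow _ _ _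
    have ha : (4 * D₀) ^ ((t + 3) ^ (x - 1)) ≤ 2 ^ (4 * D₀ * (x + 3) ^ (x - 1) * n ^ (x - 1)) := by
      calc (4 * D₀) ^ ((t + 3) ^ (x - 1)) ≤ (2 ^ (4 * D₀)) ^ ((t + 3) ^ (x - 1)) :=
            Nat.pow_le_pow_left (le_two_pow' _) _
        _ = 2 ^ (4 * D₀ * (t + 3) ^ (x - 1)) := by rw [← pow_mul]
        _ ≤ 2 ^ (4 * D₀ * ((x + 3) ^ (x - 1) * n ^ (x - 1))) :=
            Nat.pow_le_pow_right (by norm_num) (Nat.mul_le_mul_left _ ht3)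
        _ = 2 ^ (4 * D₀ * (x + 3) ^ (x - 1) * n ^ (x - 1)) := by ring_nf
    have hb : t + 1 ≤ 2 ^ ((x + 1) * n ^ (x - 1)) := by
      calc t + 1 ≤ (x + 1) * n := by rw [ht]; nlinarith
        _ ≤ (x + 1) * n ^ (x - 1) := Nat.mul_le_mul_left _ hnn
        _ ≤ 2 ^ ((x + 1) * n ^ (x - 1)) := le_two_pow' _
    have hab := mul_le_two_pow ha hb
    have hc' : t * x ≤ 2 ^ (x * x * n ^ (x - 1)) := by
      calc t * x = x * x * n := by rw [ht]; ring
        _ ≤ x * x * n ^ (x - 1) := Nat.mul_le_mul_left _ hnn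
        _ ≤ 2 ^ (x * x * n ^ (x - 1)) := le_two_pow' _
    have hd' : 2 * R ≤ 2 ^ (2 * R * n ^ (x - 1)) := by
      calc 2 * R ≤ 2 * R * n ^ (x - 1) := by nlinarith
        _ ≤ 2 ^ (2 * R * n ^ (x - 1)) := le_two_pow' _
    have hsum1 := add_le_two_pow hab hc'
    have hsum2 := add_le_two_pow hsum1 hd'
    have hfin : boundE t x D₀ + 2 * R ≤
        2 ^ (4 * D₀ * (x + 3) ^ (x - 1) * n ^ (x - 1) + (x + 1) * n ^ (x - 1) +
          x * x * n ^ (x - 1) + 1 + (2 * R * n ^ (x - 1)) + 1) := by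
      have := hsum2
      omega
    refine le_trans hfin ?_
    apply Nat.pow_le_pow_right (by norm_num)
    have hexp : 4 * D₀ * (x + 3) ^ (x - 1) * n ^ (x - 1) + (x + 1) * n ^ (x - 1) +
        x * x * n ^ (x - 1) + 1 + (2 * R * n ^ (x - 1)) + 1 ≤ Kc * n ^ (x - 1) := by
      rw [hKc]
      nlinarith
    exact hexp
  have h2R : 2 * R ≤ Ng := by omega
  obtain ⟨b, hbavg⟩ := averaging k x R hxR hRam Ng h2R c
  set A := ((range Ng).powersetCard x).filter
    (fun T => ∀ e ⊆ T, e.card = k → c e = b) with hA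
  have hAsub : A ⊆ (range Ng).powersetCard x := filter_subset _ _
  have hAcard : (range Ng).card ^ x ≤ A.card * D₀ := by
    rw [card_range]
    exact hbavg
  have hbound : boundE t x D₀ ≤ (range Ng).card := by rw [card_range]; omega
  obtain ⟨B, hB1, hB2, hB3⟩ := erdosBox t x (range Ng) A D₀ hD₀pos hAsub hAcard hbound
  have hcB : ∀ i < x, x * n ≤ (B i).card := by
    intro i hi
    rw [(hB1 i hi).2]
  obtain ⟨D, hD1, hD2, hD3⟩ := extract n hn x B A hcB hB2 hB3
  refine ⟨D, b, ?_, hD2, ?_⟩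
  · intro j hj
    refine ⟨(hD1 j hj).1, ?_⟩
    intro a ha
    have h5 := (hD1 j hj).2 ha
    rw [mem_biUnion] at h5
    obtain ⟨i, hi, hai⟩ := h5
    exact (hB1 i (mem_range.1 hi)).1 hai
  · intro s hsc hsmem hsint
    set v : ℕ → ℕ := fun j =>
      if h : (s ∩ D j).Nonempty then (s ∩ D j).min' h
      else if h2 : (D j).Nonempty then (D j).min' h2 else 0 with hv
    have hvD : ∀ j < x, v j ∈ D j := by
      intro j hj
      have hDne : (D j).Nonempty := card_pos.1 (by rw [(hD1 j hj).1]; omega)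
      by_cases h : (s ∩ D j).Nonempty
      · simp only [hv, dif_pos h]
        exact mem_of_mem_inter_right ((s ∩ D j).min'_mem h)
      · simp only [hv, dif_neg h, dif_pos hDne]
        exact (D j).min'_mem hDne
    have hEA := hD3 v hvD
    rw [hA, mem_filter] at hEA
    apply hEA.2 s ?_ hsc
    intro u hu
    obtain ⟨j, hj, hjD⟩ := hsmem u hu
    have hne : (s ∩ D j).Nonempty := ⟨u, mem_inter.2 ⟨hu, hjD⟩⟩
    have hvj : v j = u := by
      simp only [hv, dif_pos hne]
      exact Finset.card_le_one.1 (hsint j hj) _ ((s ∩ D j).min'_mem hne) _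
        (mem_inter.2 ⟨hu, hjD⟩)
    rw [mem_image]
    exact ⟨j, mem_range.2 hj, hvj⟩


/-- The ordered Ramsey number `R_<(G, H)` of two ordered uniform hypergraphs given by edge
predicates `E` on `[m]` and `E'` on `[m']`: the least `N` such that every red/blue coloring of
the finite subsets of `[N]` contains a red (`true`) increasing copy of the first hypergraph or
a blue (`false`) increasing copy of the second one. -/
noncomputable def ordRamseyH {m m' : ℕ}
    (E : Finset (Fin m) → Prop) (E' : Finset (Fin m') → Prop) : ℕ :=
  sInf {N | ∀ c : Finset (Fin N) → Bool,
    (∃ f : Fin m → Fin N, StrictMono f ∧ ∀ e, E e → c (e.image f) = true) ∨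
    (∃ g : Fin m' → Fin N, StrictMono g ∧ ∀ e, E' e → c (e.image g) = false)}

/-- An ordered hypergraph on `[n]` with edge predicate `E` has interval chromatic number at most
`χ`: `[n]` can be partitioned into `χ` consecutive intervals (given by a monotone map to
`Fin χ`) such that no edge contains two vertices from the same interval. -/
def IntervalChromaticLE {n : ℕ} (E : Finset (Fin n) → Prop) (χ : ℕ) : Prop :=
  ∃ g : Fin n → Fin χ, Monotone g ∧
    ∀ e, E e → ∀ i ∈ e, ∀ j ∈ e, i ≠ j → g i ≠ g j

theorem stmt15 (k χ : ℕ) (hk : 2 ≤ k) (hχ : k ≤ χ) :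
    ∃ C : ℝ, 0 < C ∧ ∀ n : ℕ, ∀ E : Finset (Fin n) → Prop,
      (∀ e, E e → e.card = k) → IntervalChromaticLE E χ →
        (ordRamseyH E E : ℝ) ≤ 2 ^ (C * (n : ℝ) ^ (χ - 1)) := by
  obtain ⟨Kc, hKc1, hmain⟩ := mainNat k χ hk hχ
  refine ⟨(Kc : ℝ), by exact_mod_cast hKc1, ?_⟩
  intro n E hE hIC
  rcases Nat.eq_zero_or_pos n with hn0 | hn1
  · subst hn0
    have h0 : (0 : ℕ) ∈ {N | ∀ c : Finset (Fin N) → Bool,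
        (∃ f : Fin 0 → Fin N, StrictMono f ∧ ∀ e, E e → c (e.image f) = true) ∨
        (∃ g : Fin 0 → Fin N, StrictMono g ∧ ∀ e, E e → c (e.image g) = false)} := by
      intro c
      left
      refine ⟨fun i => i.elim0, fun i => i.elim0, ?_⟩
      intro e he
      exfalso
      have h1 := hE e he
      have h2 : e = ∅ := by
        ext a
        exact a.elim0
      rw [h2] at h1
      simp at h1
      omega
    have hle : ordRamseyH E E ≤ 0 := Nat.sInf_le h0
    have heq : ordRamseyH E E = 0 := by omega
    rw [heq]
    norm_num
    positivity
  · obtain ⟨g, hgmono, hgrainbow⟩ := hIC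
    set Ng := 2 ^ (Kc * n ^ (χ - 1)) with hNg
    have hmem : ∀ c : Finset (Fin Ng) → Bool,
        (∃ f : Fin n → Fin Ng, StrictMono f ∧ ∀ e, E e → c (e.image f) = true) ∨
        (∃ f : Fin n → Fin Ng, StrictMono f ∧ ∀ e, E e → c (e.image f) = false) := by
      intro c
      set cn : Finset ℕ → Bool := fun s =>
        if h : ∀ u ∈ s, u < Ng then c (s.attachFin h) else true with hcn
      obtain ⟨D, b, hD1, hD2, hD3⟩ := hmain n hn1 cn
      -- block disjointness
      have hdisj : ∀ j1, j1 < χ → ∀ j2, j2 < χ → j1 ≠ j2 → ∀ a, a ∈ D j1 → a ∈ D j2 → False := by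
        intro j1 h1 j2 h2 hne a ha1 ha2
        rcases lt_or_gt_of_ne hne with h | h
        · exact lt_irrefl a (hD2 j1 j2 h h2 a ha1 a ha2)
        · exact lt_irrefl a (hD2 j2 j1 h h1 a ha2 a ha1)
      -- rank within block
      set rk : Fin n → ℕ := fun i =>
        ((univ : Finset (Fin n)).filter (fun j => j < i ∧ g j = g i)).card with hrk
      have hrklt : ∀ i, rk i < n := by
        intro i
        have hsub : (univ : Finset (Fin n)).filter (fun j => j < i ∧ g j = g i) ⊆
            univ.erase i := by
          intro j hj
          rw [mem_filter] at hj
          exact mem_erase.2 ⟨ne_of_lt hj.2.1, mem_univ j⟩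
        calc rk i ≤ (univ.erase i).card := card_le_card hsub
          _ = n - 1 := by rw [card_erase_of_mem (mem_univ i), card_univ, Fintype.card_fin]
          _ < n := by omega
      -- the natural embedding using sorted lists
      set pick : ℕ → ℕ → ℕ := fun j r => ((D j).sort (· ≤ ·)).getD r 0 with hpick
      have hlen : ∀ j < χ, ((D j).sort (· ≤ ·)).length = n := by
        intro j hj
        rw [Finset.length_sort]
        exact (hD1 j hj).1
      have hpickmem : ∀ j, j < χ → ∀ r, r < n → pick j r ∈ D j := by
        intro j hj r hr
        have hr' : r < ((D j).sort (· ≤ ·)).length := by rw [hlen j hj]; exact hr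
        rw [hpick]
        simp only [List.getD_eq_getElem?_getD, List.getElem?_eq_getElem hr', Option.getD_some]
        exact (Finset.mem_sort _).1 (List.getElem_mem hr')
      have hpickmono : ∀ j, j < χ → ∀ r r', r < r' → r' < n → pick j r < pick j r' := by
        intro j hj r r' hrr hr'
        have hr1 : r < ((D j).sort (· ≤ ·)).length := by rw [hlen j hj]; omega
        have hr2 : r' < ((D j).sort (· ≤ ·)).length := by rw [hlen j hj]; exact hr'
        have hsorted : ((D j).sort (· ≤ ·)).Pairwise (· < ·) := List.sortedLT_iff_pairwise.1 (Finset.sortedLT_sort _)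
        have := List.pairwise_iff_getElem.1 hsorted r r' hr1 hr2 hrr
        rw [hpick]
        simp only [List.getD_eq_getElem?_getD, List.getElem?_eq_getElem hr1, List.getElem?_eq_getElem hr2,
          Option.getD_some]
        exact this
      set fnat : Fin n → ℕ := fun i => pick (g i : ℕ) (rk i) with hfnat
      have hfmem : ∀ i, fnat i ∈ D (g i : ℕ) :=
        fun i => hpickmem _ (g i).isLt _ (hrklt i)
      have hfnatmono : StrictMono fnat := by
        intro i i' hii
        have hgle : g i ≤ g i' := hgmono (le_of_lt hii)
        rcases lt_or_eq_of_le hgle with hglt | hgeq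
        · exact hD2 (g i : ℕ) (g i' : ℕ) hglt (g i').isLt _ (hfmem i) _ (hfmem i')
        · have hrklt' : rk i < rk i' := by
            have hsub : (univ : Finset (Fin n)).filter (fun j => j < i ∧ g j = g i) ⊆
                (univ : Finset (Fin n)).filter (fun j => j < i' ∧ g j = g i') := by
              intro j hj
              rw [mem_filter] at hj ⊢
              exact ⟨mem_univ j, lt_trans hj.2.1 hii, hj.2.2.trans hgeq⟩
            have hmem' : i ∈ (univ : Finset (Fin n)).filter (fun j => j < i' ∧ g j = g i') :=
              mem_filter.2 ⟨mem_univ i, hii, hgeq⟩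
            have hnotmem : i ∉ (univ : Finset (Fin n)).filter (fun j => j < i ∧ g j = g i) := by
              rw [mem_filter]
              rintro ⟨-, h, -⟩
              exact lt_irrefl i h
            exact card_lt_card ((Finset.ssubset_iff_of_subset hsub).2 ⟨i, hmem', hnotmem⟩)
          have := hpickmono (g i : ℕ) (g i).isLt (rk i) (rk i') hrklt' (hrklt i')
          rw [hfnat]
          simp only
          rw [show ((g i' : ℕ)) = ((g i : ℕ)) from by rw [hgeq]]
          exact this
      have hflt : ∀ i, fnat i < Ng := by
        intro i
        have := (hD1 (g i : ℕ) (g i).isLt).2 (hfmem i)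
        exact mem_range.1 this
      set f : Fin n → Fin Ng := fun i => ⟨fnat i, hflt i⟩ with hf
      have hfmono : StrictMono f := fun i i' h => hfnatmono h
      -- edge colors
      have hedge : ∀ e, E e → c (e.image f) = b := by
        intro e he
        have hecard := hE e he
        have hrain := hgrainbow e he
        set s := e.image fnat with hs
        have hscard : s.card = k := by
          rw [hs, card_image_of_injective e hfnatmono.injective]
          exact hecard
        have hsmem : ∀ u ∈ s, ∃ j, j < χ ∧ u ∈ D j := by
          intro u hu
          obtain ⟨i, hi, hiu⟩ := mem_image.1 hu
          exact ⟨(g i : ℕ), (g i).isLt, hiu ▸ hfmem i⟩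
        have hsint : ∀ j, j < χ → (s ∩ D j).card ≤ 1 := by
          intro j hj
          rw [card_le_one]
          intro a ha a' ha'
          rw [mem_inter] at ha ha'
          obtain ⟨i1, hi1, hia⟩ := mem_image.1 ha.1
          obtain ⟨i2, hi2, hia'⟩ := mem_image.1 ha'.1
          have hj1 : (g i1 : ℕ) = j := by
            by_contra hne
            exact hdisj _ (g i1).isLt _ hj hne a (hia ▸ hfmem i1) ha.2
          have hj2 : (g i2 : ℕ) = j := by
            by_contra hne
            exact hdisj _ (g i2).isLt _ hj hne a' (hia' ▸ hfmem i2) ha'.2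
          have hi12 : i1 = i2 := by
            by_contra hne
            exact hrain i1 hi1 i2 hi2 hne (Fin.ext (hj1.trans hj2.symm))
          rw [← hia, ← hia', hi12]
        have hcs : cn s = b := hD3 s hscard
          (fun u hu => by obtain ⟨j, hj, hjD⟩ := hsmem u hu; exact ⟨j, hj, hjD⟩)
          (fun j hj => hsint j hj)
        have hclt : ∀ u ∈ s, u < Ng := by
          intro u hu
          obtain ⟨j, hj, hjD⟩ := hsmem u hu
          exact mem_range.1 ((hD1 j hj).2 hjD)
        have hcn2 : cn s = c (s.attachFin hclt) := by
          rw [hcn]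
          simp only [dif_pos hclt]
        have hattach : s.attachFin hclt = e.image f := by
          ext a
          rw [Finset.mem_attachFin]
          constructor
          · intro hmem'
            obtain ⟨i, hi, hiu⟩ := mem_image.1 hmem'
            exact mem_image.2 ⟨i, hi, Fin.ext hiu⟩
          · intro hmem'
            obtain ⟨i, hi, hiu⟩ := mem_image.1 hmem'
            exact mem_image.2 ⟨i, hi, by rw [← hiu]⟩
        rw [← hattach, ← hcn2, hcs]
      rcases b with _ | _
      · right
        exact ⟨f, hfmono, hedge⟩
      · left
        exact ⟨f, hfmono, hedge⟩
    have hle : ordRamseyH E E ≤ Ng := Nat.sInf_le hmem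
    have hcast : ((ordRamseyH E E : ℕ) : ℝ) ≤ (Ng : ℝ) := Nat.cast_le.2 hle
    refine le_trans hcast ?_
    have heq2 : (Ng : ℝ) = 2 ^ ((Kc : ℝ) * (n : ℝ) ^ (χ - 1)) := by
      rw [hNg]
      have h3 : ((Kc : ℝ) * (n : ℝ) ^ (χ - 1)) = ((Kc * n ^ (χ - 1) : ℕ) : ℝ) := by
        push_cast
        ring
      rw [h3, Real.rpow_natCast]
      push_cast
      ring
    rw [heq2]
end

section
/- For every integer n ≥ 2, the ordered Ramsey number of the monotone 3-uniform path on n vertices satisfies R_<(MP^{(3)}_n) = binom(2n-4, n-2) + 1. -/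
lemma sort3 {α : Type*} [LinearOrder α] [DecidableEq α] {x y z : α} (hxy : x < y) (hyz : y < z) :
    ({x, y, z} : Finset α).sort (· ≤ ·) = [x, y, z] := by
  haveI : IsAntisymm α (· ≤ ·) := ⟨fun _ _ => le_antisymm⟩
  refine (fun hp h1 h2 => List.Perm.eq_of_pairwise' (r := (· ≤ ·)) (l₂ := [x, y, z]) h1 h2 hp) ?_ ?_ ?_
  · refine (Finset.sort_perm_toList _ _).trans ?_
    have h1 : x ∉ ({y, z} : Finset α) := by
      simp only [Finset.mem_insert, Finset.mem_singleton]
      push_neg; exact ⟨hxy.ne, (hxy.trans hyz).ne⟩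
    have h2 : y ∉ ({z} : Finset α) := by simp [hyz.ne]
    refine (Finset.toList_insert h1).trans ?_
    refine List.Perm.cons x ?_
    refine (Finset.toList_insert h2).trans ?_
    simp [Finset.toList_singleton]
  · exact Finset.pairwise_sort _ _
  · simp [List.pairwise_cons, hxy.le, hyz.le, (hxy.trans hyz).le]


def chi : ℕ → ℕ → ℕ → ℕ → ℕ → Bool
  | 0, _, _, _, _ => true
  | _+1, 0, _, _, _ => true
  | a+1, b+1, x, y, z =>
    if z < (a + (b+1)).choose a then chi a (b+1) x y z
    else if (a + (b+1)).choose a ≤ x then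
      chi (a+1) b (x - (a + (b+1)).choose a) (y - (a + (b+1)).choose a)
        (z - (a + (b+1)).choose a)
    else if y < (a + (b+1)).choose a then true else false
termination_by a b => a + b

lemma chi_lo {A B m0 : ℕ} (hm0 : m0 = (A + (B+1)).choose A) {x y z : ℕ} (hz : z < m0) :
    chi (A+1) (B+1) x y z = chi A (B+1) x y z := by
  subst hm0; rw [chi, if_pos hz]

lemma chi_hi {A B m0 : ℕ} (hm0 : m0 = (A + (B+1)).choose A) {x y z : ℕ} (hx : m0 ≤ x)
    (hz : ¬ z < m0) :
    chi (A+1) (B+1) x y z = chi (A+1) B (x - m0) (y - m0) (z - m0) := by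
  subst hm0; rw [chi, if_neg hz, if_pos hx]

lemma chi_mix2 {A B m0 : ℕ} (hm0 : m0 = (A + (B+1)).choose A) {x y z : ℕ} (hx : ¬ m0 ≤ x)
    (hy : y < m0) (hz : ¬ z < m0) :
    chi (A+1) (B+1) x y z = true := by
  subst hm0; rw [chi, if_neg hz, if_neg hx, if_pos hy]

lemma chi_mix1 {A B m0 : ℕ} (hm0 : m0 = (A + (B+1)).choose A) {x y z : ℕ} (hx : ¬ m0 ≤ x)
    (hy : ¬ y < m0) (hz : ¬ z < m0) :
    chi (A+1) (B+1) x y z = false := by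
  subst hm0; rw [chi, if_neg hz, if_neg hx, if_neg hy]

lemma chi_len : ∀ (t a b : ℕ), a + b ≤ t → ∀ (col : Bool) (m : ℕ) (v : ℕ → ℕ),
    (∀ i j, i < j → j < m → v i < v j) →
    (∀ i, i < m → v i < (a + b).choose a) →
    (∀ i, i + 2 < m → chi a b (v i) (v (i+1)) (v (i+2)) = col) →
    m ≤ cond col (a+1) (b+1) := by
  intro t
  induction t with
  | zero =>
    intro a b ht col m v hmono hbd _
    obtain ⟨rfl, rfl⟩ : a = 0 ∧ b = 0 := by omega
    have hm : m ≤ 1 := by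
      by_contra h
      have := hmono 0 1 (by omega) (by omega)
      have h0 := hbd 0 (by omega)
      have h1 := hbd 1 (by omega)
      simp [Nat.choose] at h0 h1
      omega
    cases col <;> simp <;> omega
  | succ t ih =>
    intro a b ht col m v hmono hbd htri
    match a, b with
    | 0, b =>
      have hm : m ≤ 1 := by
        by_contra h
        have := hmono 0 1 (by omega) (by omega)
        have h0 := hbd 0 (by omega)
        simp [Nat.choose_zero_right] at h0
        have h1 := hbd 1 (by omega)
        simp [Nat.choose_zero_right] at h1
        omega
      cases col <;> simp <;> omega
    | a+1, 0 =>
      have hm : m ≤ 1 := by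
        by_contra h
        have := hmono 0 1 (by omega) (by omega)
        have h0 := hbd 0 (by omega)
        rw [Nat.choose_self] at h0
        have h1 := hbd 1 (by omega)
        rw [Nat.choose_self] at h1
        omega
      cases col <;> simp <;> omega
    | A+1, B+1 =>
      obtain ⟨m0, hm0⟩ : ∃ m0, m0 = (A + (B+1)).choose A := ⟨_, rfl⟩
      have hpascal : (A+1 + (B+1)).choose (A+1) = m0 + (A+1 + B).choose (A+1) := by
        have h1 : A+1 + (B+1) = (A + (B+1)) + 1 := by omega
        rw [h1, Nat.choose_succ_succ, ← hm0]
        congr 2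
        omega
      by_cases hall : ∀ i, i < m → v i < m0
      · -- all vertices in first block
        have := ih A (B+1) (by omega) col m v hmono
          (fun i hi => hm0 ▸ hall i hi)
          (fun i hi2 => by
            rw [← chi_lo hm0 (hall _ (by omega))]; exact htri i hi2)
        cases col <;> simp at this ⊢ <;> omega
      · push_neg at hall
        have hex : ∃ i, i < m ∧ m0 ≤ v i := by
          obtain ⟨i, hi, hvi⟩ := hall; exact ⟨i, hi, hvi⟩
        obtain ⟨r, ⟨hrm, hvr⟩, hrmin⟩ :
            ∃ r, (r < m ∧ m0 ≤ v r) ∧ ∀ i, i < r → ¬(i < m ∧ m0 ≤ v i) :=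
          ⟨Nat.find hex, Nat.find_spec hex, fun i hi => Nat.find_min hex hi⟩
        have hlo : ∀ i, i < r → v i < m0 := by
          intro i hi
          have := hrmin i hi
          push_neg at this
          by_contra h
          push_neg at h
          exact absurd (this (by omega)) (by omega)
        have hhi : ∀ i, r ≤ i → i < m → m0 ≤ v i := by
          intro i hi him
          rcases eq_or_lt_of_le hi with rfl | h
          · exact hvr
          · exact le_trans hvr (le_of_lt (hmono r i h him))
        cases col with
        | true =>
          by_cases hr0 : r = 0
          · -- all vertices in second block
            have := ih (A+1) B (by omega) true m (fun i => v i - m0)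
              (by
                intro i j hij hjm
                have h1 := hhi i (by omega) (by omega)
                have := hmono i j hij hjm
                show v i - m0 < v j - m0
                omega)
              (by
                intro i hi
                have := hbd i hi
                have h2 := hhi i (by omega) hi
                rw [hpascal] at this
                show v i - m0 < _
                omega)
              (fun i hi2 => by
                show chi (A+1) B (v i - m0) (v (i+1) - m0) (v (i+2) - m0) = true
                rw [← chi_hi hm0 (hhi i (by omega) (by omega))
                  (by push_neg; exact hhi (i+2) (by omega) hi2)]
                exact htri i hi2)
            simpa using this
          · -- r ≥ 1 : at most one vertex in second block
            have hm1 : m ≤ r + 1 := by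
              by_contra h
              push_neg at h
              have h1 := htri (r-1) (by omega)
              have e1 : r - 1 + 1 = r := by omega
              have e2 : r - 1 + 2 = r + 1 := by omega
              rw [e1, e2] at h1
              rw [chi_mix1 hm0 (by push_neg; exact hlo _ (by omega))
                (by push_neg; exact hhi r le_rfl (by omega))
                (by push_neg; exact hhi (r+1) (by omega) (by omega))] at h1
              simp at h1
            have := ih A (B+1) (by omega) true r v
              (fun i j hij hjr => hmono i j hij (by omega))
              (fun i hi => hm0 ▸ hlo i hi)
              (fun i hi2 => by
                rw [← chi_lo hm0 (hlo _ (by omega))]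
                exact htri i (by omega))
            simp at this ⊢
            omega
        | false =>
          by_cases hr1 : r ≤ 1
          · -- at most one vertex in the first block
            have := ih (A+1) B (by omega) false (m - r) (fun i => v (i + r) - m0)
              (by
                intro i j hij hjm
                have h1 := hhi (i + r) (by omega) (by omega)
                have := hmono (i+r) (j+r) (by omega) (by omega)
                show v (i + r) - m0 < v (j + r) - m0
                omega)
              (by
                intro i hi
                have := hbd (i + r) (by omega)
                have h2 := hhi (i + r) (by omega) (by omega)
                rw [hpascal] at this
                show v (i + r) - m0 < _
                omega)
              (fun i hi2 => by
                show chi (A+1) B (v (i+r) - m0) (v (i+1+r) - m0) (v (i+2+r) - m0) = false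
                have e1 : i + 1 + r = i + r + 1 := by omega
                have e2 : i + 2 + r = i + r + 2 := by omega
                rw [e1, e2]
                rw [← chi_hi hm0 (hhi (i+r) (by omega) (by omega))
                  (by push_neg; exact hhi (i+r+2) (by omega) (by omega))]
                exact htri (i+r) (by omega))
            simp at this ⊢
            omega
          · -- r ≥ 2 : contradiction
            exfalso
            have h1 := htri (r-2) (by omega)
            have e1 : r - 2 + 1 = r - 1 := by omega
            have e2 : r - 2 + 2 = r := by omega
            rw [e1, e2] at h1
            rw [chi_mix2 hm0 (by push_neg; exact hlo _ (by omega))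
              (hlo _ (by omega))
              (by push_neg; exact hvr)] at h1
            simp at h1


def PathIn (c : Finset ℕ → Bool) (col : Bool) (S : Finset ℕ) (m : ℕ) : Prop :=
  ∃ v : ℕ → ℕ, (∀ i j, i < j → j < m → v i < v j) ∧ (∀ i, i < m → v i ∈ S) ∧
    (∀ i, i + 2 < m → c {v i, v (i+1), v (i+2)} = col)

lemma pathIn_mono {c col} {S T : Finset ℕ} {m} (hST : S ⊆ T) (h : PathIn c col S m) :
    PathIn c col T m := by
  obtain ⟨v, h1, h2, h3⟩ := h
  exact ⟨v, h1, fun i hi => hST (h2 i hi), h3⟩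

lemma pathIn_two {c col} {S : Finset ℕ} (h : 2 ≤ S.card) : PathIn c col S 2 := by
  have h1 : 1 < S.card := by omega
  obtain ⟨x, hx, y, hy, hxy⟩ := Finset.one_lt_card.1 h1
  rcases hxy.lt_or_gt with h' | h'
  · exact ⟨fun i => if i = 0 then x else y, by
      intro i j hij hj
      have : i = 0 ∧ j = 1 := by omega
      simp [this.1, this.2, h'], by
      intro i hi
      by_cases h0 : i = 0 <;> simp [h0, hx, hy], by
      intro i hi; omega⟩
  · exact ⟨fun i => if i = 0 then y else x, by
      intro i j hij hj
      have : i = 0 ∧ j = 1 := by omega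
      simp [this.1, this.2, h'], by
      intro i hi
      by_cases h0 : i = 0 <;> simp [h0, hx, hy], by
      intro i hi; omega⟩

lemma upper (c : Finset ℕ → Bool) : ∀ (t a b : ℕ), a + b ≤ t → ∀ S : Finset ℕ,
    (a + b).choose a < S.card → PathIn c true S (a+2) ∨ PathIn c false S (b+2) := by
  intro t
  induction t with
  | zero =>
    intro a b ht S hS
    obtain ⟨rfl, rfl⟩ : a = 0 ∧ b = 0 := by omega
    exact Or.inl (pathIn_two (by simp at hS; omega))
  | succ t ih =>
    intro a b ht S hS
    match a, b with
    | 0, b =>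
      refine Or.inl (pathIn_two ?_)
      simp [Nat.choose_zero_right] at hS
      omega
    | a+1, 0 =>
      refine Or.inr (pathIn_two ?_)
      rw [Nat.choose_self] at hS
      omega
    | A+1, B+1 =>
      classical
      set P : ℕ → Prop := fun x => ∃ v : ℕ → ℕ,
        (∀ i j, i < j → j < A+2 → v i < v j) ∧ (∀ i, i < A+2 → v i ∈ S) ∧
        (∀ i, i + 2 < A+2 → c {v i, v (i+1), v (i+2)} = true) ∧ v (A+1) = x with hP
      set S' : Finset ℕ := S.filter P with hS'
      have hsub : S' ⊆ S := Finset.filter_subset _ _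
      have hpascal : (A+1 + (B+1)).choose (A+1)
          = (A + (B+1)).choose A + (A+1 + B).choose (A+1) := by
        have h1 : A+1 + (B+1) = (A + (B+1)) + 1 := by omega
        rw [h1, Nat.choose_succ_succ]
        congr 2
        omega
      by_cases h1 : (A + (B+1)).choose A < (S \ S').card
      · rcases ih A (B+1) (by omega) _ h1 with ⟨v, hm, hmem, htri⟩ | hblue
        · exfalso
          have hlast : v (A+1) ∈ S \ S' := hmem (A+1) (by omega)
          have hmemS : ∀ i, i < A+2 → v i ∈ S :=
            fun i hi => (Finset.sdiff_subset) (hmem i hi)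
          have : v (A+1) ∈ S' := by
            rw [hS', Finset.mem_filter]
            exact ⟨hmemS (A+1) (by omega), v, hm, hmemS, htri, rfl⟩
          rw [Finset.mem_sdiff] at hlast
          exact hlast.2 this
        · exact Or.inr (pathIn_mono Finset.sdiff_subset hblue)
      · have h2 : (A+1 + B).choose (A+1) < S'.card := by
          have hc := Finset.card_sdiff_add_card_eq_card hsub
          omega
        rcases ih (A+1) B (by omega) S' h2 with hred | ⟨v, hm, hmem, htri⟩
        · exact Or.inl (pathIn_mono hsub hred)
        · -- v : blue (B+2)-path inside S'
          have h0 : v 0 ∈ S' := hmem 0 (by omega)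
          obtain ⟨w, hwm, hwmem, hwtri, hwlast⟩ := (Finset.mem_filter.1 h0).2
          have hu : w (A+1) = v 0 := hwlast
          by_cases hc : c {w A, v 0, v 1} = true
          · -- extend the red path w by v 1
            refine Or.inl ⟨fun i => if i < A+2 then w i else v 1, ?_, ?_, ?_⟩
            · intro i j hij hj
              by_cases hj2 : j < A+2
              · simp only [if_pos hj2, if_pos (by omega : i < A+2)]
                exact hwm i j hij hj2
              · simp only [if_neg hj2, if_pos (by omega : i < A+2)]
                have hwv : w i ≤ v 0 := by
                  rw [← hu]
                  rcases eq_or_lt_of_le (by omega : i ≤ A+1) with rfl | hlt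
                  · exact le_rfl
                  · exact (hwm i (A+1) hlt (by omega)).le
                exact lt_of_le_of_lt hwv (hm 0 1 (by omega) (by omega))
            · intro i hi
              by_cases hi2 : i < A+2
              · simp only [if_pos hi2]; exact hwmem i hi2
              · simp only [if_neg hi2]; exact hsub (hmem 1 (by omega))
            · intro i hi
              by_cases hi2 : i + 2 < A+2
              · simp only [if_pos (by omega : i < A+2), if_pos (by omega : i+1 < A+2),
                  if_pos hi2]
                exact hwtri i hi2
              · have hieq : i = A := by omega
                simp only [if_pos (show i < A+2 by omega), if_pos (show i+1 < A+2 by omega),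
                  if_neg hi2]
                rw [hieq, hu]
                exact hc
          · -- prepend w A to the blue path v
            have hc' : c {w A, v 0, v 1} = false := by
              cases h : c {w A, v 0, v 1} <;> simp_all
            refine Or.inr ⟨fun i => if i = 0 then w A else v (i-1), ?_, ?_, ?_⟩
            · intro i j hij hj
              by_cases hi0 : i = 0
              · simp only [hi0, if_pos rfl, if_neg (by omega : ¬ j = 0)]
                have : w A < v 0 := by
                  rw [← hu]; exact hwm A (A+1) (by omega) (by omega)
                rcases eq_or_lt_of_le (by omega : 1 ≤ j) with hj1 | hj1
                · rw [← hj1]; exact this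
                · exact this.trans (hm 0 (j-1) (by omega) (by omega))
              · simp only [if_neg hi0, if_neg (by omega : ¬ j = 0)]
                exact hm (i-1) (j-1) (by omega) (by omega)
            · intro i hi
              by_cases hi0 : i = 0
              · simp only [hi0, if_pos rfl]; exact hwmem A (by omega)
              · simp only [if_neg hi0]; exact hsub (hmem (i-1) (by omega))
            · intro i hi
              by_cases hi0 : i = 0
              · subst hi0
                simp only [if_pos rfl, if_neg (by omega : ¬ (1:ℕ) = 0),
                  if_neg (by omega : ¬ (2:ℕ) = 0)]
                simpa using hc'
              · simp only [if_neg hi0, if_neg (by omega : ¬ i+1 = 0),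
                  if_neg (by omega : ¬ i+2 = 0)]
                have e1 : i + 1 - 1 = (i-1) + 1 := by omega
                have e2 : i + 2 - 1 = (i-1) + 2 := by omega
                rw [e1, e2]
                exact htri (i-1) (by omega)

lemma image_triple {α β : Type*} [DecidableEq α] [DecidableEq β] (f : α → β) (x y z : α) :
    ({x, y, z} : Finset α).image f = {f x, f y, f z} := by
  simp [Finset.image_insert]

/-- The monotone `3`-uniform path `MP^{(3)}_n` on `[n]`: edges are the triples of consecutive
vertices `{i, i+1, i+2}`. -/
def MP3 (n : ℕ) (e : Finset (Fin n)) : Prop :=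
  ∃ i j k : Fin n, (j : ℕ) = (i : ℕ) + 1 ∧ (k : ℕ) = (j : ℕ) + 1 ∧ e = {i, j, k}

lemma convPath {N m : ℕ} (hN : 0 < N) (c : Finset (Fin N) → Bool) (col : Bool)
    (h : PathIn (fun e => c (e.image fun x =>
        (⟨x % N, Nat.mod_lt _ hN⟩ : Fin N))) col (Finset.range N) m) :
    ∃ f : Fin m → Fin N, StrictMono f ∧ ∀ e, MP3 m e → c (e.image f) = col := by
  obtain ⟨v, hmono, hmem, htri⟩ := h
  have hvlt : ∀ i, i < m → v i < N := by
    intro i hi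
    simpa using hmem i hi
  have key : ∀ (x : ℕ) (hx : x < N),
      (fun x => (⟨x % N, Nat.mod_lt _ hN⟩ : Fin N)) x = ⟨x, hx⟩ :=
    fun x hx => Fin.ext (by simp [Nat.mod_eq_of_lt hx])
  refine ⟨fun i => ⟨v i.val, hvlt i.val i.isLt⟩, ?_, ?_⟩
  · intro i j hij
    exact Fin.mk_lt_mk.2 (hmono i.val j.val hij j.isLt)
  · rintro e ⟨i, j, k, hj, hk, rfl⟩
    have hk2 : (i : ℕ) + 2 < m := by omega
    have h1 := htri i.val hk2
    simp only at h1
    rw [image_triple]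
    convert h1 using 2
    ext t
    simp only [Finset.mem_insert, Finset.mem_singleton, Fin.ext_iff, Fin.val_mk,
      Nat.mod_eq_of_lt (hvlt _ i.isLt),
      Nat.mod_eq_of_lt (hvlt _ (show (i:ℕ)+1 < m by omega)),
      Nat.mod_eq_of_lt (hvlt _ (show (i:ℕ)+2 < m by omega)), hj, hk,
      Finset.mem_image, image_triple]

def lowCol (a N : ℕ) (e : Finset (Fin N)) : Bool :=
  match (e.sort (· ≤ ·)).map Fin.val with
  | [x, y, z] => chi a a x y z
  | _ => true

lemma lowCol_eval {a N : ℕ} {x y z : Fin N} (h1 : x < y) (h2 : y < z) :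
    lowCol a N {x, y, z} = chi a a x.val y.val z.val := by
  rw [lowCol, sort3 h1 h2]
  rfl

lemma lowCol_no_path {a N : ℕ} (hNle : N ≤ (a + a).choose a) (col : Bool)
    (f : Fin (a+2) → Fin N) (hf : StrictMono f) :
    ¬ (∀ e, MP3 (a+2) e → lowCol a N (e.image f) = col) := by
  intro hall
  have hlen := chi_len (a + a) a a le_rfl col (a + 2)
    (fun i => if h : i < a + 2 then (f ⟨i, h⟩).val else 0)
    (by
      intro i j hij hj
      show (if h : i < a + 2 then (f ⟨i, h⟩).val else 0)
        < (if h : j < a + 2 then (f ⟨j, h⟩).val else 0)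
      rw [dif_pos (by omega : i < a + 2), dif_pos hj]
      exact Fin.mk_lt_mk.1 (hf (by simpa [Fin.mk_lt_mk] using hij)))
    (by
      intro i hi
      show (if h : i < a + 2 then (f ⟨i, h⟩).val else 0) < (a + a).choose a
      rw [dif_pos hi]
      have := (f ⟨i, hi⟩).isLt
      omega)
    (by
      intro i hi
      have hmp : MP3 (a+2) ({⟨i, by omega⟩, ⟨i+1, by omega⟩, ⟨i+2, by omega⟩} :
          Finset (Fin (a+2))) :=
        ⟨⟨i, by omega⟩, ⟨i+1, by omega⟩, ⟨i+2, by omega⟩, rfl, rfl, rfl⟩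
      have h1 := hall _ hmp
      rw [image_triple] at h1
      have hf1 : f ⟨i, by omega⟩ < f ⟨i+1, by omega⟩ := hf (by simp [Fin.mk_lt_mk])
      have hf2 : f ⟨i+1, by omega⟩ < f ⟨i+2, by omega⟩ := hf (by simp [Fin.mk_lt_mk])
      rw [lowCol_eval hf1 hf2] at h1
      have hgen : ∀ x y z x' y' z' : ℕ, x = x' → y = y' → z = z' →
          chi a a x y z = col → chi a a x' y' z' = col := by
        rintro x y z _ _ _ rfl rfl rfl h
        exact h
      exact hgen _ _ _ _ _ _ (dif_pos (by omega)).symm (dif_pos (by omega)).symm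
        (dif_pos hi).symm h1)
  cases col <;> simp only [Bool.cond_true, Bool.cond_false] at hlen <;> omega

theorem stmt19 (n : ℕ) (hn : 2 ≤ n) :
    ordRamseyH (MP3 n) (MP3 n) = Nat.choose (2 * n - 4) (n - 2) + 1 := by
  obtain ⟨a, rfl⟩ : ∃ a, n = a + 2 := ⟨n - 2, by omega⟩
  have hM : Nat.choose (2 * (a+2) - 4) ((a+2) - 2) = (a + a).choose a := by
    congr 1 <;> omega
  rw [hM]
  have hmem : (a + a).choose a + 1 ∈ {N | ∀ c : Finset (Fin N) → Bool,
      (∃ f : Fin (a+2) → Fin N, StrictMono f ∧ ∀ e, MP3 (a+2) e → c (e.image f) = true) ∨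
      (∃ g : Fin (a+2) → Fin N, StrictMono g ∧ ∀ e, MP3 (a+2) e → c (e.image g) = false)} := by
    intro c
    have hN0 : 0 < (a + a).choose a + 1 := by omega
    have h := upper (fun e => c (e.image fun x =>
        (⟨x % ((a + a).choose a + 1), Nat.mod_lt _ hN0⟩ : Fin ((a + a).choose a + 1))))
      (a + a) a a le_rfl (Finset.range ((a + a).choose a + 1))
      (by rw [Finset.card_range]; omega)
    rcases h with h | h
    · exact Or.inl (convPath hN0 c true h)
    · exact Or.inr (convPath hN0 c false h)
  rw [ordRamseyH]
  refine le_antisymm (Nat.sInf_le hmem) (le_csInf ⟨_, hmem⟩ ?_)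
  rintro N hN
  by_contra hlt
  push_neg at hlt
  have hNle : N ≤ (a + a).choose a := by omega
  rcases hN (lowCol a N) with ⟨f, hf, hfe⟩ | ⟨f, hf, hfe⟩
  · exact lowCol_no_path hNle true f hf hfe
  · exact lowCol_no_path hNle false f hf hfe
end
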